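/- arXiv:1905.02383 — 8 statements merged into one kernel-verified Lean document; each statement's English description precedes it below -/
import Mathlib

section
/- A function f: [0,1] → [0,1] is a trade-off function (i.e., equals T(P,Q)(α) = inf{β_φ : α_φ ≤ α} for some pair of probability distributions P, Q, where the infimum is over measurable rejection rules φ with values in [0,1]) if and only if f is convex, continuous, non-increasing, and satisfies f(x) ≤ 1 − x for all x ∈ [0,1]. -/
open MeasureTheory ProbabilityTheory Set

open Filter Topology
open scoped ENNReal NNReal
/-- The trade-off function `T(P,Q)(α)`: the infimum of type II errors `1 - ∫ φ dQ`
over measurable rejection rules `φ : Ω → [0,1]` with type I error `∫ φ dP ≤ α`. -/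
noncomputable def tradeoff {Ω : Type*} [MeasurableSpace Ω] (P Q : Measure Ω) (α : ℝ) : ℝ :=
  sInf { β : ℝ | ∃ φ : Ω → ℝ, Measurable φ ∧ (∀ ω, φ ω ∈ Icc (0:ℝ) 1) ∧
    (∫ ω, φ ω ∂P) ≤ α ∧ β = 1 - ∫ ω, φ ω ∂Q }

namespace TOff

variable {Ω : Type*} [MeasurableSpace Ω] {P Q : Measure Ω}

def TSet (P Q : Measure Ω) (α : ℝ) : Set ℝ :=
  { β : ℝ | ∃ φ : Ω → ℝ, Measurable φ ∧ (∀ ω, φ ω ∈ Icc (0:ℝ) 1) ∧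
    (∫ ω, φ ω ∂P) ≤ α ∧ β = 1 - ∫ ω, φ ω ∂Q }

lemma tradeoff_eq (α : ℝ) : tradeoff P Q α = sInf (TSet P Q α) := rfl

lemma integrable_test [IsFiniteMeasure P] {φ : Ω → ℝ} (hm : Measurable φ)
    (h01 : ∀ ω, φ ω ∈ Icc (0:ℝ) 1) : Integrable φ P := by
  refine (integrable_const (1:ℝ)).mono' hm.aestronglyMeasurable ?_
  exact Filter.Eventually.of_forall fun ω => by
    rw [Real.norm_eq_abs, abs_le]; constructor <;> linarith [(h01 ω).1, (h01 ω).2]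

lemma integral_test_nonneg {φ : Ω → ℝ} (h01 : ∀ ω, φ ω ∈ Icc (0:ℝ) 1) :
    0 ≤ ∫ ω, φ ω ∂P := integral_nonneg fun ω => (h01 ω).1

lemma integral_test_le_one [IsProbabilityMeasure P] {φ : Ω → ℝ} (hm : Measurable φ)
    (h01 : ∀ ω, φ ω ∈ Icc (0:ℝ) 1) : ∫ ω, φ ω ∂P ≤ 1 := by
  calc ∫ ω, φ ω ∂P ≤ ∫ _ω, (1:ℝ) ∂P :=
        integral_mono (integrable_test hm h01) (integrable_const 1) fun ω => (h01 ω).2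
    _ = 1 := by simp

lemma bddBelow_TSet [IsProbabilityMeasure Q] (α : ℝ) : BddBelow (TSet P Q α) := by
  refine ⟨0, fun β hβ => ?_⟩
  obtain ⟨φ, hm, h01, _, rfl⟩ := hβ
  linarith [integral_test_le_one (P := Q) hm h01]

lemma nonempty_TSet (hα : 0 ≤ α) : (TSet P Q α).Nonempty := by
  refine ⟨1, (fun _ => 0), measurable_const, fun ω => ⟨le_refl _, zero_le_one⟩, ?_, by simp⟩
  simpa using hα

lemma tradeoff_nonneg [IsProbabilityMeasure Q] (α : ℝ) : 0 ≤ tradeoff P Q α := by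
  rw [tradeoff_eq]
  rcases Set.eq_empty_or_nonempty (TSet P Q α) with h | h
  · simp [h, Real.sInf_empty]
  · refine le_csInf h fun β hβ => ?_
    obtain ⟨φ, hm, h01, _, rfl⟩ := hβ
    linarith [integral_test_le_one (P := Q) hm h01]

lemma tradeoff_le [IsProbabilityMeasure Q] {α β : ℝ} (hβ : β ∈ TSet P Q α) :
    tradeoff P Q α ≤ β := csInf_le (bddBelow_TSet α) hβ

lemma le_tradeoff [IsProbabilityMeasure Q] {α c : ℝ} (hα : 0 ≤ α)
    (h : ∀ β ∈ TSet P Q α, c ≤ β) : c ≤ tradeoff P Q α :=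
  le_csInf (nonempty_TSet hα) h

lemma tradeoff_le_one_sub [IsProbabilityMeasure P] [IsProbabilityMeasure Q]
    {α : ℝ} (hα : α ∈ Icc (0:ℝ) 1) : tradeoff P Q α ≤ 1 - α := by
  refine tradeoff_le ⟨fun _ => α, measurable_const, fun ω => hα, by simp, by simp⟩

lemma tradeoff_antitone [IsProbabilityMeasure Q] : AntitoneOn (tradeoff P Q) (Ici 0) := by
  intro a ha b _hb hab
  rw [tradeoff_eq, tradeoff_eq]
  refine csInf_le_csInf (bddBelow_TSet b) (nonempty_TSet ha) ?_
  intro β hβ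
  obtain ⟨φ, hm, h01, hint, rfl⟩ := hβ
  exact ⟨φ, hm, h01, hint.trans hab, rfl⟩



end TOff

namespace TOff
variable {Ω : Type*} [MeasurableSpace Ω] {P Q : Measure Ω}

lemma tradeoff_convexOn [IsProbabilityMeasure P] [IsProbabilityMeasure Q] :
    ConvexOn ℝ (Ici (0:ℝ)) (tradeoff P Q) := by
  refine ⟨convex_Ici 0, ?_⟩
  intro a ha b hb t s ht hs hts
  have hmix : (0:ℝ) ≤ t * a + s * b := by
    have := mem_Ici.mp ha; have := mem_Ici.mp hb; positivity
  simp only [smul_eq_mul]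
  refine le_of_forall_pos_le_add fun ε hε => ?_
  obtain ⟨β₁, hβ₁, hβ₁lt⟩ := exists_lt_of_csInf_lt (nonempty_TSet (mem_Ici.mp ha))
    (show sInf (TSet P Q a) < tradeoff P Q a + ε by rw [tradeoff_eq]; linarith)
  obtain ⟨β₂, hβ₂, hβ₂lt⟩ := exists_lt_of_csInf_lt (nonempty_TSet (mem_Ici.mp hb))
    (show sInf (TSet P Q b) < tradeoff P Q b + ε by rw [tradeoff_eq]; linarith)
  obtain ⟨φ₁, hm₁, h01₁, hP₁, rfl⟩ := hβ₁
  obtain ⟨φ₂, hm₂, h01₂, hP₂, rfl⟩ := hβ₂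
  have hint₁P : Integrable φ₁ P := integrable_test hm₁ h01₁
  have hint₂P : Integrable φ₂ P := integrable_test hm₂ h01₂
  have hint₁Q : Integrable φ₁ Q := integrable_test hm₁ h01₁
  have hint₂Q : Integrable φ₂ Q := integrable_test hm₂ h01₂
  have key : ∀ (μ : Measure Ω), Integrable φ₁ μ → Integrable φ₂ μ →
      ∫ ω, (t * φ₁ ω + s * φ₂ ω) ∂μ = t * ∫ ω, φ₁ ω ∂μ + s * ∫ ω, φ₂ ω ∂μ := by
    intro μ h₁ h₂
    rw [integral_add (h₁.const_mul t) (h₂.const_mul s), integral_const_mul, integral_const_mul]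
  have hmem : (1 - ∫ ω, (t * φ₁ ω + s * φ₂ ω) ∂Q) ∈ TSet P Q (t * a + s * b) := by
    refine ⟨fun ω => t * φ₁ ω + s * φ₂ ω, (hm₁.const_mul t).add (hm₂.const_mul s),
      fun ω => ⟨?_, ?_⟩, ?_, rfl⟩
    · have := (h01₁ ω).1; have := (h01₂ ω).1; positivity
    · have h1 := (h01₁ ω).2; have h2 := (h01₂ ω).2
      have := mul_le_mul_of_nonneg_left h1 ht
      have := mul_le_mul_of_nonneg_left h2 hs
      simp only
      nlinarith
    · rw [key P hint₁P hint₂P]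
      have : t * ∫ ω, φ₁ ω ∂P ≤ t * a := by
        apply mul_le_mul_of_nonneg_left hP₁ ht
      have : s * ∫ ω, φ₂ ω ∂P ≤ s * b := by
        apply mul_le_mul_of_nonneg_left hP₂ hs
      linarith [mul_le_mul_of_nonneg_left hP₁ ht]
  have := tradeoff_le hmem
  rw [key Q hint₁Q hint₂Q] at this
  have e1 := mul_le_mul_of_nonneg_left hβ₁lt.le ht
  have e2 := mul_le_mul_of_nonneg_left hβ₂lt.le hs
  nlinarith [this, e1, e2]


lemma integral_wd [IsFiniteMeasure Q] (φ : Ω → ℝ) (hm : Measurable φ) :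
    ∫ ω, φ ω ∂(P.withDensity (Q.rnDeriv P)) = ∫ ω, φ ω * (Q.rnDeriv P ω).toReal ∂P := by
  have h1 : P.withDensity (Q.rnDeriv P)
      = P.withDensity (fun ω => ((Q.rnDeriv P ω).toNNReal : ℝ≥0∞)) := by
    refine withDensity_congr_ae ?_
    filter_upwards [Measure.rnDeriv_lt_top Q P] with ω hω
    rw [ENNReal.coe_toNNReal hω.ne]
  rw [h1, integral_withDensity_eq_integral_smul
    ((Measure.measurable_rnDeriv Q P).ennreal_toNNReal) φ]
  congr 1 with ω
  simp [NNReal.smul_def, ENNReal.toReal, mul_comm]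

lemma tail_tendsto [IsFiniteMeasure Q] :
    Tendsto (fun n : ℕ => ∫ ω, Set.indicator {ω | (n:ℝ) < (Q.rnDeriv P ω).toReal}
      (fun ω => (Q.rnDeriv P ω).toReal) ω ∂P) atTop (𝓝 0) := by
  set g : Ω → ℝ := fun ω => (Q.rnDeriv P ω).toReal with hg
  have hgm : Measurable g := (Measure.measurable_rnDeriv Q P).ennreal_toReal
  have hgi : Integrable g P := Measure.integrable_toReal_rnDeriv
  have h0 : (0:ℝ) = ∫ ω, (0:ℝ) ∂P := by simp
  rw [h0]
  refine tendsto_integral_of_dominated_convergence g ?_ hgi ?_ ?_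
  · intro n
    exact (hgm.indicator (measurableSet_lt measurable_const hgm)).aestronglyMeasurable
  · intro n
    filter_upwards with ω
    rw [Real.norm_eq_abs]
    simp only [Set.indicator_apply, Set.mem_setOf_eq]
    by_cases h : (n:ℝ) < (Q.rnDeriv P ω).toReal
    · simp only [h, if_true]
      rw [abs_of_nonneg ENNReal.toReal_nonneg]
    · simp only [h, if_false, abs_zero]
      exact ENNReal.toReal_nonneg
  · filter_upwards with ω
    obtain ⟨N, hN⟩ := exists_nat_gt (g ω)
    refine tendsto_const_nhds.congr' ?_
    filter_upwards [eventually_ge_atTop N] with n hn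
    have h : ¬ ((n:ℝ) < (Q.rnDeriv P ω).toReal) := not_lt.mpr (hN.le.trans (by exact_mod_cast hn))
    simp only [Set.indicator_apply, Set.mem_setOf_eq, h, if_false]

lemma indicator_test (N : Set Ω) : ∀ ω, N.indicator (fun _ => (1:ℝ)) ω ∈ Icc (0:ℝ) 1 := by
  intro ω
  by_cases h : ω ∈ N <;> simp [Set.indicator_apply, h]

lemma tradeoff_zero_le [IsProbabilityMeasure P] [IsProbabilityMeasure Q] :
    tradeoff P Q 0 ≤ 1 - ((Q.singularPart P) univ).toReal := by
  obtain ⟨s, hs, hsing, hPc⟩ := Measure.mutuallySingular_singularPart Q P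
  set N := sᶜ with hN
  have hNm : MeasurableSet N := hs.compl
  have hmem : (1 - ∫ ω, N.indicator (fun _ => (1:ℝ)) ω ∂Q) ∈ TSet P Q 0 := by
    refine ⟨N.indicator (fun _ => 1), measurable_const.indicator hNm,
      indicator_test N, ?_, rfl⟩
    rw [integral_indicator_const _ hNm]
    simp [hPc, measureReal_def]
  refine le_trans (tradeoff_le hmem) ?_
  rw [integral_indicator_const _ hNm]
  · have h1 : (Q.singularPart P) univ ≤ Q N := by
      have : (Q.singularPart P) univ ≤ (Q.singularPart P) s + (Q.singularPart P) N := by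
        rw [← Set.union_compl_self s] at *
        exact measure_union_le _ _
      rw [hsing, zero_add] at this
      exact this.trans ((Measure.singularPart_le Q P) N)
    have h2 : Q N ≠ ⊤ := measure_ne_top Q N
    have := ENNReal.toReal_mono h2 h1
    have hQle : (Q N).toReal ≤ 1 := by
      simpa using ENNReal.toReal_mono (measure_ne_top Q univ) (measure_mono (subset_univ N))
    simp only [smul_eq_mul, mul_one, measureReal_def]
    linarith

lemma tradeoff_lower [IsProbabilityMeasure P] [IsProbabilityMeasure Q] {α M : ℝ}
    (hα : 0 ≤ α) (hM : 0 ≤ M) :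
    1 - ((Q.singularPart P) univ).toReal - M * α
      - (∫ ω, Set.indicator {ω | M < (Q.rnDeriv P ω).toReal}
          (fun ω => (Q.rnDeriv P ω).toReal) ω ∂P) ≤ tradeoff P Q α := by
  set g : Ω → ℝ := fun ω => (Q.rnDeriv P ω).toReal with hgdef
  have hgm : Measurable g := (Measure.measurable_rnDeriv Q P).ennreal_toReal
  have hgi : Integrable g P := Measure.integrable_toReal_rnDeriv
  have hsetm : MeasurableSet {ω | M < g ω} := measurableSet_lt measurable_const hgm
  refine le_tradeoff hα ?_
  rintro β ⟨φ, hm, h01, hint, rfl⟩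
  have hsingfin : IsFiniteMeasure (Q.singularPart P) :=
    isFiniteMeasure_of_le Q (Measure.singularPart_le Q P)
  have hwdfin : IsFiniteMeasure (P.withDensity (Q.rnDeriv P)) :=
    isFiniteMeasure_of_le Q (Measure.withDensity_rnDeriv_le Q P)
  have hdecomp : ∫ ω, φ ω ∂Q
      = ∫ ω, φ ω ∂(Q.singularPart P) + ∫ ω, φ ω ∂(P.withDensity (Q.rnDeriv P)) := by
    conv_lhs => rw [← Measure.singularPart_add_rnDeriv Q P]
    exact integral_add_measure (integrable_test hm h01) (integrable_test hm h01)
  -- bound on singular part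
  have hb1 : ∫ ω, φ ω ∂(Q.singularPart P) ≤ ((Q.singularPart P) univ).toReal := by
    calc ∫ ω, φ ω ∂(Q.singularPart P) ≤ ∫ _ω, (1:ℝ) ∂(Q.singularPart P) :=
          integral_mono (integrable_test hm h01) (integrable_const 1) fun ω => (h01 ω).2
      _ = ((Q.singularPart P) univ).toReal := by simp [measureReal_def]
  -- bound on a.c. part
  have hφg_int : Integrable (fun ω => φ ω * g ω) P := by
    refine hgi.mono' (hm.mul hgm).aestronglyMeasurable ?_
    filter_upwards with ω
    rw [Real.norm_eq_abs, abs_mul, abs_of_nonneg (h01 ω).1,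
      abs_of_nonneg (ENNReal.toReal_nonneg)]
    have := (h01 ω).2
    nlinarith [ENNReal.toReal_nonneg (a := Q.rnDeriv P ω), (h01 ω).1]
  have hptwise : ∀ ω, φ ω * g ω ≤ M * φ ω + Set.indicator {ω | M < g ω} g ω := by
    intro ω
    simp only [Set.indicator_apply, Set.mem_setOf_eq]
    by_cases h : M < g ω
    · simp only [h, if_true]
      have h1 : 0 ≤ (1 - φ ω) * g ω :=
        mul_nonneg (sub_nonneg.2 (h01 ω).2) ENNReal.toReal_nonneg
      have h2 : 0 ≤ M * φ ω := mul_nonneg hM (h01 ω).1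
      nlinarith
    · simp only [h, if_false]
      have h1 : 0 ≤ φ ω * (M - g ω) :=
        mul_nonneg (h01 ω).1 (sub_nonneg.2 (not_lt.mp h))
      nlinarith
  have hb2 : ∫ ω, φ ω * g ω ∂P
      ≤ M * α + ∫ ω, Set.indicator {ω | M < g ω} g ω ∂P := by
    have hrhs : Integrable (fun ω => M * φ ω + Set.indicator {ω | M < g ω} g ω) P :=
      ((integrable_test hm h01).const_mul M).add (hgi.indicator hsetm)
    calc ∫ ω, φ ω * g ω ∂P
        ≤ ∫ ω, (M * φ ω + Set.indicator {ω | M < g ω} g ω) ∂P :=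
          integral_mono hφg_int hrhs hptwise
      _ = M * ∫ ω, φ ω ∂P + ∫ ω, Set.indicator {ω | M < g ω} g ω ∂P := by
          rw [integral_add ((integrable_test hm h01).const_mul M) (hgi.indicator hsetm),
            integral_const_mul]
      _ ≤ M * α + ∫ ω, Set.indicator {ω | M < g ω} g ω ∂P := by
          have := mul_le_mul_of_nonneg_left hint hM
          linarith
  have := integral_wd (P := P) (Q := Q) φ hm
  rw [hdecomp, this]
  linarith

end TOff

noncomputable def Dslope (f : ℝ → ℝ) (x : ℝ) : ℝ := sInf (slope f x '' Ioc x 1)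

section RightDeriv
variable {f : ℝ → ℝ} (hconv : ConvexOn ℝ (Icc (0:ℝ) 1) f)

lemma Dslope_nonempty {x : ℝ} (hx : x ∈ Ioo (0:ℝ) 1) : (slope f x '' Ioc x 1).Nonempty :=
  ⟨slope f x 1, mem_image_of_mem _ ⟨hx.2, le_refl 1⟩⟩

lemma mem_Icc01 {x : ℝ} (hx : x ∈ Ioo (0:ℝ) 1) : x ∈ Icc (0:ℝ) 1 :=
  ⟨hx.1.le, hx.2.le⟩

include hconv in
lemma Dslope_bddBelow {x : ℝ} (hx : x ∈ Ioo (0:ℝ) 1) :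
    BddBelow (slope f x '' Ioc x 1) := by
  refine ⟨slope f x 0, ?_⟩
  rintro z ⟨y, hy, rfl⟩
  rw [slope_def_field, slope_def_field]
  exact hconv.secant_mono (mem_Icc01 hx) ⟨le_refl 0, zero_le_one⟩
    ⟨(hx.1.trans hy.1).le, hy.2⟩ (ne_of_lt hx.1) (ne_of_gt hy.1)
    ((hx.1.trans hy.1).le.trans (le_refl y) |>.trans (le_refl y) |>.trans_eq rfl) |>.trans_eq rfl
    |>.trans (le_refl _)

include hconv in
lemma Dslope_le_slope {x y : ℝ} (hx : x ∈ Ioo (0:ℝ) 1) (hy : y ∈ Ioc x 1) :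
    Dslope f x ≤ slope f x y :=
  csInf_le (Dslope_bddBelow hconv hx) (mem_image_of_mem _ hy)

lemma le_Dslope {x c : ℝ} (hx : x ∈ Ioo (0:ℝ) 1)
    (h : ∀ y ∈ Ioc x 1, c ≤ slope f x y) : c ≤ Dslope f x :=
  le_csInf (Dslope_nonempty hx) (by rintro z ⟨y, hy, rfl⟩; exact h y hy)

include hconv in
lemma slope_le_Dslope {x y : ℝ} (hx : x ∈ Ioo (0:ℝ) 1) (hy : y ∈ Ioo (0:ℝ) 1)
    (hxy : x < y) : slope f x y ≤ Dslope f y := by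
  refine le_Dslope hy fun z hz => ?_
  rw [slope_comm]
  rw [slope_def_field, slope_def_field]
  exact hconv.secant_mono (mem_Icc01 hy) (mem_Icc01 hx)
    ⟨(hy.1.trans hz.1).le, hz.2⟩ (ne_of_lt hxy) (ne_of_gt hz.1) (hxy.le.trans hz.1.le)

include hconv in
lemma Dslope_mono : MonotoneOn (Dslope f) (Ioo (0:ℝ) 1) := by
  intro x hx y hy hxy
  rcases eq_or_lt_of_le hxy with rfl | hxy
  · exact le_refl _
  exact (Dslope_le_slope hconv hx ⟨hxy, hy.2.le⟩).trans (slope_le_Dslope hconv hx hy hxy)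

include hconv in
lemma Dslope_nonpos {x : ℝ} (hx : x ∈ Ioo (0:ℝ) 1) (hf0 : 0 ≤ f x) (hf1 : f 1 = 0) :
    Dslope f x ≤ 0 := by
  refine (Dslope_le_slope hconv hx ⟨hx.2, le_refl 1⟩).trans ?_
  rw [slope_def_field, hf1]
  apply div_nonpos_of_nonpos_of_nonneg <;> linarith [hx.2]

include hconv in
lemma Dslope_tendsto {x : ℝ} (hx : x ∈ Ioo (0:ℝ) 1) :
    Tendsto (slope f x) (𝓝[>] x) (𝓝 (Dslope f x)) := by
  refine tendsto_order.2 ⟨fun l hl => ?_, fun u hu => ?_⟩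
  · filter_upwards [Ioo_mem_nhdsGT_of_mem (⟨le_refl x, hx.2⟩ : x ∈ Ico x 1)] with y hy
    exact hl.trans_le (Dslope_le_slope hconv hx ⟨hy.1, hy.2.le⟩)
  · obtain ⟨z, hz, hzu⟩ := exists_lt_of_csInf_lt (Dslope_nonempty hx) hu
    obtain ⟨y₀, hy₀, rfl⟩ := hz
    filter_upwards [Ioo_mem_nhdsGT_of_mem (⟨le_refl x, hy₀.1⟩ : x ∈ Ico x y₀)] with y hy
    refine lt_of_le_of_lt ?_ hzu
    rw [slope_def_field, slope_def_field]
    exact hconv.secant_mono (mem_Icc01 hx)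
      ⟨(hx.1.trans hy.1).le, (hy.2.le.trans hy₀.2)⟩
      ⟨(hx.1.trans hy₀.1).le, hy₀.2⟩ (ne_of_gt hy.1) (ne_of_gt hy₀.1) hy.2.le

include hconv in
lemma Dslope_hasDerivWithinAt {x : ℝ} (hx : x ∈ Ioo (0:ℝ) 1) :
    HasDerivWithinAt f (Dslope f x) (Ioi x) x := by
  rw [hasDerivWithinAt_iff_tendsto_slope, diff_singleton_eq_self (notMem_Ioi.mpr (le_refl x))]
  exact Dslope_tendsto hconv hx

include hconv in
lemma Dslope_ftc (hcont : ContinuousOn f (Icc (0:ℝ) 1)) {a b : ℝ}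
    (ha : 0 < a) (hab : a ≤ b) (hb : b < 1) :
    ∫ x in a..b, Dslope f x = f b - f a := by
  have hsub : Icc a b ⊆ Ioo (0:ℝ) 1 := fun x hx => ⟨ha.trans_le hx.1, hx.2.trans_lt hb⟩
  refine intervalIntegral.integral_eq_sub_of_hasDeriv_right_of_le hab
    (hcont.mono (fun x hx => ⟨ha.le.trans hx.1, hx.2.trans hb.le⟩))
    (fun x hx => Dslope_hasDerivWithinAt hconv (hsub ⟨hx.1.le, hx.2.le⟩)) ?_
  refine ((Dslope_mono hconv).mono ?_).intervalIntegrable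
  rw [uIcc_of_le hab]
  exact hsub

end RightDeriv

section MeasureConstr
variable {f : ℝ → ℝ} (hconv : ConvexOn ℝ (Icc (0:ℝ) 1) f)
  (hcont : ContinuousOn f (Icc (0:ℝ) 1))
  (hmaps : MapsTo f (Icc (0:ℝ) 1) (Icc (0:ℝ) 1)) (hf1 : f 1 = 0)

noncomputable def gE (f : ℝ → ℝ) : ℝ → ℝ≥0∞ := fun x =>
  if x ≤ 0 then ⊤ else if 1 ≤ x then 0 else ENNReal.ofReal (-(Dslope f x))

lemma gE_eq_of_mem {x : ℝ} (hx : x ∈ Ioo (0:ℝ) 1) :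
    gE f x = ENNReal.ofReal (-(Dslope f x)) := by
  simp only [gE, not_le.mpr hx.1, if_false, not_le.mpr hx.2, if_false]

include hconv in
lemma gE_antitone : Antitone (gE f) := by
  intro x y hxy
  unfold gE
  by_cases hx0 : x ≤ 0
  · simp [hx0, le_top]
  by_cases hy1 : (1:ℝ) ≤ y
  · have hy0 : ¬ y ≤ 0 := by linarith
    simp only [hx0, hy0, hy1, if_false, if_true]
    split_ifs <;> simp
  · have hy0 : ¬ y ≤ 0 := fun h => hx0 (hxy.trans h)
    have hx1 : ¬ (1:ℝ) ≤ x := fun h => hy1 (h.trans hxy)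
    simp only [hx0, hy0, hx1, hy1, if_false]
    exact ENNReal.ofReal_le_ofReal (by
      have := Dslope_mono hconv ⟨not_le.mp hx0, not_le.mp hx1⟩ ⟨not_le.mp hy0, not_le.mp hy1⟩ hxy
      linarith)

include hconv in
lemma gE_measurable : Measurable (gE f) := (gE_antitone hconv).measurable

noncomputable def nuM (f : ℝ → ℝ) : Measure ℝ :=
  (volume.restrict (Ioo (0:ℝ) 1)).withDensity (gE f)

include hconv hcont hmaps hf1 in
lemma lint_Ioo {a b : ℝ} (ha : 0 < a) (hab : a ≤ b) (hb : b < 1) :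
    ∫⁻ x in Ioo a b, gE f x ∂volume = ENNReal.ofReal (f a - f b) := by
  have hii : IntervalIntegrable (Dslope f) volume a b := by
    refine ((Dslope_mono hconv).mono ?_).intervalIntegrable
    rw [uIcc_of_le hab]
    exact fun x hx => ⟨ha.trans_le hx.1, hx.2.trans_lt hb⟩
  have hint : IntegrableOn (fun x => -(Dslope f x)) (Ioc a b) volume :=
    ((intervalIntegrable_iff_integrableOn_Ioc_of_le hab).mp hii).neg
  have hnn : 0 ≤ᵐ[volume.restrict (Ioc a b)] fun x => -(Dslope f x) := by
    filter_upwards [ae_restrict_mem measurableSet_Ioc] with x hx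
    have hx' : x ∈ Ioo (0:ℝ) 1 := ⟨ha.trans hx.1, hx.2.trans_lt hb⟩
    have h0 : 0 ≤ f x := (hmaps (mem_Icc01 hx')).1
    simp only [Pi.zero_apply]
    linarith [Dslope_nonpos hconv hx' h0 hf1]
  have hcongr : ∫⁻ x in Ioo a b, gE f x ∂volume = ∫⁻ x in Ioc a b, gE f x ∂volume := by
    rw [Measure.restrict_congr_set Ioo_ae_eq_Ioc]
  rw [hcongr]
  have hgE : ∫⁻ x in Ioc a b, gE f x ∂volume
      = ∫⁻ x in Ioc a b, ENNReal.ofReal (-(Dslope f x)) ∂volume := by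
    refine lintegral_congr_ae ?_
    filter_upwards [ae_restrict_mem measurableSet_Ioc] with x hx
    exact gE_eq_of_mem ⟨ha.trans hx.1, hx.2.trans_lt hb⟩
  rw [hgE, ← ofReal_integral_eq_lintegral_ofReal hint hnn]
  congr 1
  have := Dslope_ftc hconv hcont ha hab hb
  rw [← intervalIntegral.integral_of_le hab] at *
  rw [intervalIntegral.integral_neg, this]
  ring

include hconv hcont hmaps hf1 in
lemma nuM_Ioo {α : ℝ} (hα : α ∈ Icc (0:ℝ) 1) :
    nuM f (Ioo 0 α) = ENNReal.ofReal (f 0 - f α) := by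
  have hbase : ∀ s : Set ℝ, MeasurableSet s →
      nuM f s = ∫⁻ x in s ∩ Ioo 0 1, gE f x ∂volume := by
    intro s hs
    rw [nuM, withDensity_apply _ hs, Measure.restrict_restrict hs]
  rcases eq_or_lt_of_le hα.1 with h0 | h0
  · rw [← h0]
    simp [hbase ∅ MeasurableSet.empty]
  -- α > 0
  have hIoo : Ioo (0:ℝ) α ∩ Ioo 0 1 = Ioo 0 α := by
    refine inter_eq_left.mpr fun x hx => ⟨hx.1, hx.2.trans_le hα.2⟩
  rw [hbase _ measurableSet_Ioo, hIoo]
  -- increasing sequence of intervals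
  set c : ℕ → ℝ := fun n => α / (n + 3) with hc
  set d : ℕ → ℝ := fun n => α - α / (n + 3) with hd
  have hcpos : ∀ n, 0 < c n := fun n => by positivity
  have hclt : ∀ n, c n ≤ d n := by
    intro n
    rw [hc, hd]
    have h3 : (3:ℝ) ≤ (n:ℝ) + 3 := by
      have : (0:ℝ) ≤ n := Nat.cast_nonneg n
      linarith
    have : α / (n + 3) ≤ α / 2 :=
      div_le_div_of_nonneg_left h0.le (by norm_num) (by push_cast; linarith)
    linarith [this]
  have hdlt : ∀ n, d n < 1 := by
    intro n
    have : d n < α := by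
      rw [hd]
      have := hcpos n
      rw [hc] at this
      linarith
    exact this.trans_le hα.2
  have hmono : Monotone (fun n => Ioo (c n) (d n)) := by
    intro m n hmn
    have hcm : c n ≤ c m := by
      rw [hc]
      refine div_le_div_of_nonneg_left h0.le (by positivity) ?_
      push_cast
      have : (m:ℝ) ≤ n := by exact_mod_cast hmn
      linarith
    have hdm : d m ≤ d n := by
      rw [hd]; simp only; linarith [hcm]
    exact Ioo_subset_Ioo hcm hdm
  have hunion : (⋃ n, Ioo (c n) (d n)) = Ioo 0 α := by
    apply Subset.antisymm
    · refine iUnion_subset fun n => Ioo_subset_Ioo (hcpos n).le (by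
        have := hcpos n; rw [hd] at *; linarith)
    · intro x hx
      have hc0 : Tendsto c atTop (𝓝 0) := by
        rw [hc]
        have : Tendsto (fun n : ℕ => ((n:ℝ) + 3)) atTop atTop := by
          apply tendsto_atTop_add_const_right
          exact tendsto_natCast_atTop_atTop
        simpa using Tendsto.div_atTop tendsto_const_nhds this
      have hd0 : Tendsto d atTop (𝓝 α) := by
        rw [hd]
        simpa using tendsto_const_nhds.sub hc0
      obtain ⟨n₁, hn₁⟩ := (hc0.eventually (eventually_lt_nhds hx.1)).exists_forall_of_atTop
      obtain ⟨n₂, hn₂⟩ := (hd0.eventually (eventually_gt_nhds hx.2)).exists_forall_of_atTop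
      exact mem_iUnion.mpr ⟨max n₁ n₂, hn₁ _ (le_max_left _ _), hn₂ _ (le_max_right _ _)⟩
  set κ : Measure ℝ := volume.withDensity (gE f) with hκ
  have hκs : ∀ s : Set ℝ, MeasurableSet s → κ s = ∫⁻ x in s, gE f x ∂volume := by
    intro s hs
    rw [hκ, withDensity_apply _ hs]
  have htend : Tendsto (fun n => κ (Ioo (c n) (d n))) atTop (𝓝 (κ (Ioo 0 α))) := by
    rw [← hunion]
    exact tendsto_measure_iUnion_atTop hmono
  have heval : ∀ n, κ (Ioo (c n) (d n)) = ENNReal.ofReal (f (c n) - f (d n)) := by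
    intro n
    rw [hκs _ measurableSet_Ioo]
    exact lint_Ioo hconv hcont hmaps hf1 (hcpos n) (hclt n) (hdlt n)
  have hc0 : Tendsto c atTop (𝓝 0) := by
    rw [hc]
    have : Tendsto (fun n : ℕ => ((n:ℝ) + 3)) atTop atTop := by
      apply tendsto_atTop_add_const_right
      exact tendsto_natCast_atTop_atTop
    simpa using Tendsto.div_atTop tendsto_const_nhds this
  have hd0 : Tendsto d atTop (𝓝 α) := by
    rw [hd]
    simpa using tendsto_const_nhds.sub hc0
  have hfc : Tendsto (fun n => f (c n)) atTop (𝓝 (f 0)) := by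
    refine (hcont 0 ⟨le_refl 0, zero_le_one⟩).tendsto.comp ?_
    rw [tendsto_nhdsWithin_iff]
    refine ⟨hc0, Eventually.of_forall fun n => ⟨(hcpos n).le, ?_⟩⟩
    exact ((hclt n).trans (hdlt n).le).trans le_rfl
  have hfd : Tendsto (fun n => f (d n)) atTop (𝓝 (f α)) := by
    refine (hcont α ⟨hα.1, hα.2⟩).tendsto.comp ?_
    rw [tendsto_nhdsWithin_iff]
    refine ⟨hd0, Eventually.of_forall fun n => ⟨?_, (hdlt n).le⟩⟩
    linarith [hcpos n, hclt n]
  have htend2 : Tendsto (fun n => κ (Ioo (c n) (d n))) atTop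
      (𝓝 (ENNReal.ofReal (f 0 - f α))) := by
    simp only [heval]
    exact (ENNReal.continuous_ofReal.tendsto _).comp (hfc.sub hfd)
  have := tendsto_nhds_unique htend htend2
  rw [← this, ← hκs _ measurableSet_Ioo]

end MeasureConstr

section Construction
variable {f : ℝ → ℝ} (hconv : ConvexOn ℝ (Icc (0:ℝ) 1) f)
  (hcont : ContinuousOn f (Icc (0:ℝ) 1))
  (hanti : AntitoneOn f (Icc (0:ℝ) 1))
  (hmaps : MapsTo f (Icc (0:ℝ) 1) (Icc (0:ℝ) 1)) (hf1 : f 1 = 0)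

noncomputable def PM : Measure ℝ := volume.restrict (Ioo (0:ℝ) 1)

noncomputable def QM (f : ℝ → ℝ) : Measure ℝ :=
  nuM f + (ENNReal.ofReal (1 - f 0)) • Measure.dirac 2

instance : IsProbabilityMeasure PM := by
  constructor
  rw [PM, Measure.restrict_apply MeasurableSet.univ, univ_inter, Real.volume_Ioo]
  norm_num

include hconv hcont hmaps hf1 in
lemma nuM_univ : nuM f univ = ENNReal.ofReal (f 0) := by
  have h1 : nuM f univ = nuM f (Ioo 0 1) := by
    rw [nuM, withDensity_apply _ MeasurableSet.univ, withDensity_apply _ measurableSet_Ioo,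
      Measure.restrict_univ, Measure.restrict_restrict measurableSet_Ioo, inter_self]
  rw [h1, nuM_Ioo hconv hcont hmaps hf1 ⟨zero_le_one, le_refl 1⟩, hf1, sub_zero]

include hconv hcont hmaps hf1 in
lemma nuM_fin : IsFiniteMeasure (nuM f) := by
  constructor
  rw [nuM_univ hconv hcont hmaps hf1]
  exact ENNReal.ofReal_lt_top

include hconv hcont hmaps hf1 in
lemma QM_prob : IsProbabilityMeasure (QM f) := by
  constructor
  have h0 : f 0 ∈ Icc (0:ℝ) 1 := hmaps ⟨le_refl 0, zero_le_one⟩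
  rw [QM, Measure.add_apply, Measure.smul_apply, Measure.dirac_apply_of_mem (mem_univ 2),
    nuM_univ hconv hcont hmaps hf1, smul_eq_mul, mul_one,
    ← ENNReal.ofReal_add h0.1 (by linarith [h0.2])]
  norm_num

-- the optimal test
noncomputable def testset (α : ℝ) : Set ℝ := Ioo 0 α ∪ {2}

lemma testset_meas (α : ℝ) : MeasurableSet (testset α) :=
  measurableSet_Ioo.union (measurableSet_singleton 2)

lemma testset_inter {α : ℝ} (hα : α ∈ Icc (0:ℝ) 1) :
    testset α ∩ Ioo 0 1 = Ioo 0 α := by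
  ext x
  constructor
  · rintro ⟨hx1 | hx2, hx⟩
    · exact hx1
    · rw [mem_singleton_iff] at hx2
      subst hx2
      exact absurd hx.2 (by norm_num)
  · intro hx
    exact ⟨Or.inl hx, ⟨hx.1, hx.2.trans_le hα.2⟩⟩

include hconv hcont hmaps hf1 in
lemma QM_testset {α : ℝ} (hα : α ∈ Icc (0:ℝ) 1) (hf0α : f α ≤ f 0) (hfα : f α ∈ Icc (0:ℝ) 1) :
    QM f (testset α) = ENNReal.ofReal (1 - f α) := by
  have h0 : f 0 ∈ Icc (0:ℝ) 1 := hmaps ⟨le_refl 0, zero_le_one⟩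
  have hset : Ioo (0:ℝ) α ∩ Ioo 0 1 = Ioo 0 α :=
    inter_eq_left.mpr fun x hx => ⟨hx.1, hx.2.trans_le hα.2⟩
  have hnu : nuM f (testset α) = ENNReal.ofReal (f 0 - f α) := by
    rw [← nuM_Ioo hconv hcont hmaps hf1 hα, nuM, withDensity_apply _ (testset_meas α),
      withDensity_apply _ measurableSet_Ioo, Measure.restrict_restrict (testset_meas α),
      Measure.restrict_restrict measurableSet_Ioo, testset_inter hα, hset]
  have hd : Measure.dirac (2:ℝ) (testset α) = 1 :=
    Measure.dirac_apply_of_mem (Or.inr rfl)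
  rw [QM, Measure.add_apply, hnu, Measure.smul_apply, hd, smul_eq_mul, mul_one,
    ← ENNReal.ofReal_add (by linarith) (by linarith [h0.2])]
  congr 1
  ring

noncomputable def gr (f : ℝ → ℝ) : ℝ → ℝ := fun x => (gE f x).toReal

lemma gr_nonneg (x : ℝ) : 0 ≤ gr f x := ENNReal.toReal_nonneg

include hconv in
lemma gr_meas : Measurable (gr f) := (gE_measurable hconv).ennreal_toReal

include hconv in
lemma gr_anti : AntitoneOn (gr f) (Ioo (0:ℝ) 1) := by
  intro x hx y hy hxy
  have hx' : gE f x ≠ ⊤ := by rw [gE_eq_of_mem hx]; exact ENNReal.ofReal_ne_top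
  exact ENNReal.toReal_mono hx' (gE_antitone hconv hxy)

include hconv hcont hmaps hf1 in
lemma lint_gE_univ : ∫⁻ x, gE f x ∂PM = ENNReal.ofReal (f 0) := by
  have h := nuM_univ hconv hcont hmaps hf1
  rw [nuM, withDensity_apply _ MeasurableSet.univ, Measure.restrict_univ] at h
  rw [PM]
  exact h

include hconv hcont hmaps hf1 in
lemma gr_integrable : Integrable (gr f) PM := by
  refine integrable_toReal_of_lintegral_ne_top (gE_measurable hconv).aemeasurable ?_
  rw [lint_gE_univ hconv hcont hmaps hf1]
  exact ENNReal.ofReal_ne_top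

include hconv hcont hmaps hf1 in
lemma int_nuM {φ : ℝ → ℝ} (hm : Measurable φ) :
    ∫ x, φ x ∂(nuM f) = ∫ x, φ x * gr f x ∂PM := by
  have hae : (fun x => gE f x) =ᵐ[PM] (fun x => ((gE f x).toNNReal : ℝ≥0∞)) := by
    rw [PM]
    filter_upwards [ae_restrict_mem measurableSet_Ioo] with x hx
    rw [gE_eq_of_mem hx, ENNReal.coe_toNNReal ENNReal.ofReal_ne_top]
  have h1 : nuM f = PM.withDensity (fun x => ((gE f x).toNNReal : ℝ≥0∞)) := by
    rw [nuM, ← PM]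
    exact withDensity_congr_ae hae
  rw [h1, integral_withDensity_eq_integral_smul
    ((gE_measurable hconv).ennreal_toNNReal) φ]
  congr 1 with x
  rw [NNReal.smul_def, smul_eq_mul, mul_comm]
  rfl

include hconv hcont hmaps hf1 hanti in
lemma int_gr_Ioo {α : ℝ} (hα : α ∈ Icc (0:ℝ) 1) :
    ∫ x in Ioo 0 α, gr f x ∂PM = f 0 - f α := by
  have hset : Ioo (0:ℝ) α ∩ Ioo 0 1 = Ioo 0 α :=
    inter_eq_left.mpr fun x hx => ⟨hx.1, hx.2.trans_le hα.2⟩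
  have hres : PM.restrict (Ioo 0 α) = volume.restrict (Ioo 0 α) := by
    rw [PM, Measure.restrict_restrict measurableSet_Ioo, hset]
  have hnn : 0 ≤ᵐ[PM.restrict (Ioo 0 α)] gr f :=
    Eventually.of_forall fun x => gr_nonneg x
  rw [integral_eq_lintegral_of_nonneg_ae hnn
    ((gr_meas hconv).aestronglyMeasurable)]
  have hae : (fun x => ENNReal.ofReal (gr f x)) =ᵐ[PM.restrict (Ioo 0 α)] gE f := by
    rw [hres]
    filter_upwards [ae_restrict_mem measurableSet_Ioo] with x hx
    have hx' : x ∈ Ioo (0:ℝ) 1 := ⟨hx.1, hx.2.trans_le hα.2⟩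
    rw [gr, ENNReal.ofReal_toReal (by rw [gE_eq_of_mem hx']; exact ENNReal.ofReal_ne_top)]
  rw [lintegral_congr_ae hae, hres, ← withDensity_apply _ measurableSet_Ioo]
  have h2 : volume.withDensity (gE f) (Ioo 0 α) = nuM f (Ioo 0 α) := by
    rw [nuM, withDensity_apply _ measurableSet_Ioo, withDensity_apply _ measurableSet_Ioo,
      Measure.restrict_restrict measurableSet_Ioo, hset]
  rw [h2, nuM_Ioo hconv hcont hmaps hf1 hα,
    ENNReal.toReal_ofReal (by linarith [hanti ⟨le_refl 0, zero_le_one⟩ hα hα.1])]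

include hconv hcont hmaps hf1 hanti in
lemma NP_bound {φ : ℝ → ℝ} (hm : Measurable φ) (h01 : ∀ x, φ x ∈ Icc (0:ℝ) 1)
    {α : ℝ} (hα : α ∈ Icc (0:ℝ) 1) (hφα : ∫ x, φ x ∂PM ≤ α) :
    ∫ x, φ x * gr f x ∂PM ≤ f 0 - f α := by
  have hgrint : Integrable (gr f) PM := gr_integrable hconv hcont hmaps hf1
  have hφint : Integrable φ PM := TOff.integrable_test hm h01
  have hφgrint : Integrable (fun x => φ x * gr f x) PM := by
    refine hgrint.mono' (hm.mul (gr_meas hconv)).aestronglyMeasurable ?_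
    filter_upwards with x
    rw [Real.norm_eq_abs, abs_mul, abs_of_nonneg (h01 x).1, abs_of_nonneg (gr_nonneg x)]
    nlinarith [(h01 x).2, gr_nonneg (f := f) x, (h01 x).1]
  rcases eq_or_lt_of_le hα.1 with h0 | h0
  · -- α = 0
    have hz : ∫ x, φ x ∂PM = 0 :=
      le_antisymm (hφα.trans_eq h0.symm) (TOff.integral_test_nonneg h01)
    have hφ0 : φ =ᵐ[PM] 0 := by
      have := (integral_eq_zero_iff_of_nonneg (fun x => (h01 x).1) hφint).mp hz
      exact this
    have : (fun x => φ x * gr f x) =ᵐ[PM] 0 := by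
      filter_upwards [hφ0] with x hx
      simp [hx]
    have hz2 : ∫ x, φ x * gr f x ∂PM = 0 := by
      rw [integral_congr_ae this]; simp
    rw [hz2, ← h0, sub_self]
  rcases eq_or_lt_of_le hα.2 with h1 | h1
  · -- α = 1
    subst h1
    calc ∫ x, φ x * gr f x ∂PM ≤ ∫ x, gr f x ∂PM := by
          refine integral_mono hφgrint hgrint fun x => ?_
          nlinarith [(h01 x).2, gr_nonneg (f := f) x, (h01 x).1]
      _ = f 0 - f 1 := by
          have hres : PM.restrict (Ioo (0:ℝ) 1) = PM := by
            rw [PM, Measure.restrict_restrict measurableSet_Ioo, inter_self]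
          rw [← int_gr_Ioo hconv hcont hanti hmaps hf1 ⟨zero_le_one, le_refl 1⟩, hres]
  -- 0 < α < 1
  set χ : ℝ → ℝ := (Ioo (0:ℝ) α).indicator (fun _ => (1:ℝ)) with hχ
  set c : ℝ := gr f α with hc
  have hcnn : 0 ≤ c := gr_nonneg α
  have hχint : Integrable χ PM := (integrable_const (1:ℝ)).indicator measurableSet_Ioo
  have hχgr : (fun x => χ x * gr f x) = (Ioo (0:ℝ) α).indicator (gr f) := by
    funext x
    by_cases h : x ∈ Ioo (0:ℝ) α <;> simp [hχ, Set.indicator_apply, h]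
  have hχgrint : Integrable (fun x => χ x * gr f x) PM := by
    rw [hχgr]; exact hgrint.indicator measurableSet_Ioo
  have hintχ : ∫ x, χ x ∂PM = α := by
    have hss : Ioo (0:ℝ) α ∩ Ioo 0 1 = Ioo 0 α :=
      inter_eq_left.mpr fun x hx => ⟨hx.1, hx.2.trans_le hα.2⟩
    rw [hχ, integral_indicator_const _ measurableSet_Ioo, PM, measureReal_def,
      Measure.restrict_apply measurableSet_Ioo, hss, Real.volume_Ioo,
      smul_eq_mul, mul_one, sub_zero, ENNReal.toReal_ofReal hα.1]
  have hintχgr : ∫ x, χ x * gr f x ∂PM = f 0 - f α := by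
    rw [hχgr, integral_indicator measurableSet_Ioo]
    exact int_gr_Ioo hconv hcont hanti hmaps hf1 hα
  have hptwise : (fun x => φ x * gr f x + χ x * c) ≤ᵐ[PM] (fun x => χ x * gr f x + φ x * c) := by
    rw [PM, Filter.EventuallyLE]
    filter_upwards [ae_restrict_mem measurableSet_Ioo] with x hx
    by_cases h : x ∈ Ioo (0:ℝ) α
    · have hgec : c ≤ gr f x :=
        gr_anti hconv hx (show α ∈ Ioo (0:ℝ) 1 from ⟨h0, h1⟩) h.2.le
      have hkey := mul_le_mul_of_nonneg_left hgec (sub_nonneg.2 (h01 x).2)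
      simp only [hχ, Set.indicator_of_mem h]
      nlinarith
    · have hax : α ≤ x := not_lt.mp fun hlt => h (mem_Ioo.mpr ⟨hx.1, hlt⟩)
      have hgec : gr f x ≤ c :=
        gr_anti hconv (show α ∈ Ioo (0:ℝ) 1 from ⟨h0, h1⟩) hx hax
      have hkey := mul_le_mul_of_nonneg_left hgec (h01 x).1
      simp only [hχ, Set.indicator_of_notMem h]
      nlinarith
  have hmono := integral_mono_ae (hφgrint.add (hχint.mul_const c))
    (hχgrint.add (hφint.mul_const c)) hptwise
  simp only [Pi.add_apply] at hmono
  have e1 : ∫ x, (φ x * gr f x + χ x * c) ∂PM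
      = (∫ x, φ x * gr f x ∂PM) + (∫ x, χ x ∂PM) * c := by
    rw [integral_add hφgrint (hχint.mul_const c), integral_mul_const]
  have e2 : ∫ x, (χ x * gr f x + φ x * c) ∂PM
      = (∫ x, χ x * gr f x ∂PM) + (∫ x, φ x ∂PM) * c := by
    rw [integral_add hχgrint (hφint.mul_const c), integral_mul_const]
  rw [e1, e2, hintχ, hintχgr] at hmono
  have hfin : (∫ x, φ x ∂PM) * c ≤ α * c := mul_le_mul_of_nonneg_right hφα hcnn
  linarith

end Construction

section Final
variable {f : ℝ → ℝ} (hconv : ConvexOn ℝ (Icc (0:ℝ) 1) f)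
  (hcont : ContinuousOn f (Icc (0:ℝ) 1))
  (hanti : AntitoneOn f (Icc (0:ℝ) 1))
  (hmaps : MapsTo f (Icc (0:ℝ) 1) (Icc (0:ℝ) 1)) (hf1 : f 1 = 0)

include hconv hcont hmaps hf1 in
lemma int_QM {φ : ℝ → ℝ} (hm : Measurable φ) (h01 : ∀ x, φ x ∈ Icc (0:ℝ) 1) :
    ∫ x, φ x ∂(QM f) = (∫ x, φ x * gr f x ∂PM) + (1 - f 0) * φ 2 := by
  haveI := nuM_fin hconv hcont hmaps hf1
  haveI : IsFiniteMeasure ((ENNReal.ofReal (1 - f 0)) • Measure.dirac (2:ℝ)) := by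
    constructor
    rw [Measure.smul_apply, smul_eq_mul]
    exact ENNReal.mul_lt_top ENNReal.ofReal_lt_top (by simp)
  rw [QM, integral_add_measure (TOff.integrable_test hm h01) (TOff.integrable_test hm h01),
    integral_smul_measure, integral_dirac, int_nuM hconv hcont hmaps hf1 hm, smul_eq_mul,
    ENNReal.toReal_ofReal (by linarith [(hmaps ⟨le_refl 0, zero_le_one⟩).2] : (0:ℝ) ≤ 1 - f 0)]

include hconv hcont hanti hmaps hf1 in
lemma tradeoff_PM_QM {α : ℝ} (hα : α ∈ Icc (0:ℝ) 1) : tradeoff PM (QM f) α = f α := by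
  haveI := QM_prob hconv hcont hmaps hf1
  have h0 : f 0 ∈ Icc (0:ℝ) 1 := hmaps ⟨le_refl 0, zero_le_one⟩
  have hfα : f α ∈ Icc (0:ℝ) 1 := hmaps hα
  have hf0α : f α ≤ f 0 := hanti ⟨le_refl 0, zero_le_one⟩ hα hα.1
  apply le_antisymm
  · have hPtest : ∫ x, (testset α).indicator (fun _ => (1:ℝ)) x ∂PM = α := by
      rw [integral_indicator_const _ (testset_meas α), PM, measureReal_def,
        Measure.restrict_apply (testset_meas α), testset_inter hα, Real.volume_Ioo,
        smul_eq_mul, mul_one, sub_zero, ENNReal.toReal_ofReal hα.1]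
    have hQtest : ∫ x, (testset α).indicator (fun _ => (1:ℝ)) x ∂(QM f) = 1 - f α := by
      rw [integral_indicator_const _ (testset_meas α), measureReal_def,
        QM_testset hconv hcont hmaps hf1 hα hf0α hfα,
        smul_eq_mul, mul_one, ENNReal.toReal_ofReal (by linarith [hfα.2])]
    refine TOff.tradeoff_le ⟨(testset α).indicator (fun _ => 1),
      measurable_const.indicator (testset_meas α), TOff.indicator_test _, le_of_eq hPtest, ?_⟩
    rw [hQtest]; ring
  · refine TOff.le_tradeoff hα.1 ?_
    rintro β ⟨φ, hm, h01, hφ, rfl⟩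
    rw [int_QM hconv hcont hmaps hf1 hm h01]
    have hNP := NP_bound hconv hcont hanti hmaps hf1 hm h01 hα hφ
    have h2 : (1 - f 0) * φ 2 ≤ (1 - f 0) * 1 :=
      mul_le_mul_of_nonneg_left (h01 2).2 (by linarith [h0.2])
    linarith

end Final

/-- A function `f : [0,1] → [0,1]` is a trade-off function, i.e. equals `T(P,Q)` for some
pair of probability distributions `P, Q`, if and only if `f` is convex, continuous,
non-increasing and satisfies `f x ≤ 1 - x` on `[0,1]`. -/
theorem statement0 (f : ℝ → ℝ) (hf : MapsTo f (Icc (0:ℝ) 1) (Icc (0:ℝ) 1)) :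
    (∃ (Ω : Type) (_ : MeasurableSpace Ω) (P Q : Measure Ω),
        IsProbabilityMeasure P ∧ IsProbabilityMeasure Q ∧
        ∀ α ∈ Icc (0:ℝ) 1, f α = tradeoff P Q α) ↔
      (ConvexOn ℝ (Icc (0:ℝ) 1) f ∧ ContinuousOn f (Icc (0:ℝ) 1) ∧
        AntitoneOn f (Icc (0:ℝ) 1) ∧ ∀ x ∈ Icc (0:ℝ) 1, f x ≤ 1 - x) := by
  constructor
  · rintro ⟨Ω, mΩ, P, Q, hP, hQ, heq⟩
    have hconvf : ConvexOn ℝ (Icc (0:ℝ) 1) f := by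
      refine ⟨convex_Icc 0 1, fun x hx y hy t s ht hs hts => ?_⟩
      have hmem : t • x + s • y ∈ Icc (0:ℝ) 1 := (convex_Icc 0 1) hx hy ht hs hts
      rw [heq _ hmem, heq _ hx, heq _ hy]
      exact TOff.tradeoff_convexOn.2 (mem_Ici.mpr hx.1) (mem_Ici.mpr hy.1) ht hs hts
    have hantif : AntitoneOn f (Icc (0:ℝ) 1) := by
      intro x hx y hy hxy
      rw [heq _ hx, heq _ hy]
      exact TOff.tradeoff_antitone (mem_Ici.mpr hx.1) (mem_Ici.mpr hy.1) hxy
    have hlef : ∀ x ∈ Icc (0:ℝ) 1, f x ≤ 1 - x := by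
      intro x hx
      rw [heq _ hx]
      exact TOff.tradeoff_le_one_sub hx
    refine ⟨hconvf, ?_, hantif, hlef⟩
    -- continuity
    intro x hx
    rcases eq_or_lt_of_le hx.1 with h0 | h0
    · -- x = 0
      rw [← h0, Metric.continuousWithinAt_iff]
      intro ε hε
      obtain ⟨n, hn⟩ := ((TOff.tail_tendsto (P := P) (Q := Q)).eventually
        (eventually_lt_nhds (half_pos hε))).exists
      refine ⟨ε/(2*((n:ℝ)+1)), by positivity, fun y hy hdist => ?_⟩
      have hy0 : (0:ℝ) ≤ y := hy.1
      have hyδ : y < ε/(2*((n:ℝ)+1)) := by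
        rw [Real.dist_eq, sub_zero, abs_of_nonneg hy0] at hdist
        exact hdist
      have hfyle : f y ≤ f 0 := hantif ⟨le_refl 0, zero_le_one⟩ hy hy0
      have hlow := TOff.tradeoff_lower (P := P) (Q := Q) hy0 (Nat.cast_nonneg n)
      have hzero := TOff.tradeoff_zero_le (P := P) (Q := Q)
      rw [← heq _ hy] at hlow
      rw [← heq _ ⟨le_refl 0, zero_le_one⟩] at hzero
      have hny : (n:ℝ) * y < ε/2 := by
        have h1 : (n:ℝ) * y ≤ (n:ℝ) * (ε/(2*((n:ℝ)+1))) :=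
          mul_le_mul_of_nonneg_left hyδ.le (Nat.cast_nonneg n)
        have h2 : (n:ℝ) * (ε/(2*((n:ℝ)+1))) < ε/2 := by
          rw [show (n:ℝ) * (ε/(2*((n:ℝ)+1))) = ε/2 * ((n:ℝ)/((n:ℝ)+1)) by
            field_simp]
          have hlt : (n:ℝ)/((n:ℝ)+1) < 1 := (div_lt_one (by positivity)).mpr (by linarith)
          calc ε/2 * ((n:ℝ)/((n:ℝ)+1)) < ε/2 * 1 :=
                mul_lt_mul_of_pos_left hlt (half_pos hε)
            _ = ε/2 := mul_one _
        linarith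
      rw [Real.dist_eq, abs_of_nonpos (by linarith)]
      linarith [hn, hlow, hzero, hny]
    rcases eq_or_lt_of_le hx.2 with h1 | h1
    · -- x = 1
      subst h1
      rw [Metric.continuousWithinAt_iff]
      intro ε hε
      refine ⟨ε, hε, fun y hy hdist => ?_⟩
      have hf1 : f 1 = 0 := le_antisymm (by simpa using hlef 1 ⟨zero_le_one, le_refl 1⟩)
        (hf ⟨zero_le_one, le_refl 1⟩).1
      have hy0 : 0 ≤ f y := (hf hy).1
      have hyle : f y ≤ 1 - y := hlef y hy
      rw [Real.dist_eq, hf1, sub_zero, abs_of_nonneg hy0]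
      rw [Real.dist_eq] at hdist
      calc f y ≤ 1 - y := hyle
        _ ≤ |y - 1| := by rw [abs_sub_comm]; exact le_abs_self _
        _ < ε := hdist
    · -- interior point
      have hopen : ContinuousOn (tradeoff P Q) (Ioo (0:ℝ) 1) := by
        refine ConvexOn.continuousOn isOpen_Ioo ?_
        exact TOff.tradeoff_convexOn.subset (fun y hy => le_of_lt hy.1) (convex_Ioo 0 1)
      have hca : ContinuousAt (tradeoff P Q) x := hopen.continuousAt (Ioo_mem_nhds h0 h1)
      exact hca.continuousWithinAt.congr (fun y hy => heq y hy) (heq x hx)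
  · rintro ⟨hconv, hcont, hanti, hle⟩
    have hf1 : f 1 = 0 := le_antisymm (by simpa using hle 1 ⟨zero_le_one, le_refl 1⟩)
      (hf ⟨zero_le_one, le_refl 1⟩).1
    exact ⟨ℝ, inferInstance, PM, QM f, inferInstance, QM_prob hconv hcont hf hf1,
      fun α hα => (tradeoff_PM_QM hconv hcont hanti hf hf1 hα).symm⟩
end

section
/- If f = T(P,Q), then the left-continuous inverse f⁻¹(α) := inf{t ∈ [0,1] : f(t) ≤ α} equals T(Q,P). -/
open MeasureTheory ProbabilityTheory Set

open Filter
open scoped ENNReal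

section Aux

variable {Ω : Type*} [MeasurableSpace Ω]

lemma aux_integrable (μ : Measure Ω) [IsProbabilityMeasure μ] {φ : Ω → ℝ}
    (hm : Measurable φ) (hb : ∀ ω, φ ω ∈ Icc (0:ℝ) 1) : Integrable φ μ := by
  refine (integrable_const (1:ℝ)).mono' hm.aestronglyMeasurable
    (Eventually.of_forall fun ω => ?_)
  rw [Real.norm_eq_abs, abs_of_nonneg (hb ω).1]
  exact (hb ω).2

lemma aux_int_nonneg (μ : Measure Ω) {φ : Ω → ℝ} (hb : ∀ ω, φ ω ∈ Icc (0:ℝ) 1) :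
    0 ≤ ∫ ω, φ ω ∂μ :=
  integral_nonneg fun ω => (hb ω).1

lemma aux_int_le_one (μ : Measure Ω) [IsProbabilityMeasure μ] {φ : Ω → ℝ}
    (hm : Measurable φ) (hb : ∀ ω, φ ω ∈ Icc (0:ℝ) 1) : ∫ ω, φ ω ∂μ ≤ 1 := by
  have h := integral_mono (aux_integrable μ hm hb) (integrable_const (1:ℝ))
    (fun ω => (hb ω).2)
  simpa using h

lemma tradeoff_bddBelow (P Q : Measure Ω) [IsProbabilityMeasure Q] (α : ℝ) :
    BddBelow { β : ℝ | ∃ φ : Ω → ℝ, Measurable φ ∧ (∀ ω, φ ω ∈ Icc (0:ℝ) 1) ∧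
      (∫ ω, φ ω ∂P) ≤ α ∧ β = 1 - ∫ ω, φ ω ∂Q } := by
  refine ⟨0, fun β hβ => ?_⟩
  obtain ⟨φ, hm, hb, -, hβ⟩ := hβ
  have := aux_int_le_one Q hm hb
  linarith [hβ]

lemma tradeoff_le (P Q : Measure Ω) [IsProbabilityMeasure Q] {α : ℝ} {φ : Ω → ℝ}
    (hm : Measurable φ) (hb : ∀ ω, φ ω ∈ Icc (0:ℝ) 1) (hint : (∫ ω, φ ω ∂P) ≤ α) :
    tradeoff P Q α ≤ 1 - ∫ ω, φ ω ∂Q :=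
  csInf_le (tradeoff_bddBelow P Q α) ⟨φ, hm, hb, hint, rfl⟩

lemma tradeoff_set_nonempty (P Q : Measure Ω) {α : ℝ} (hα : 0 ≤ α) :
    Set.Nonempty { β : ℝ | ∃ φ : Ω → ℝ, Measurable φ ∧ (∀ ω, φ ω ∈ Icc (0:ℝ) 1) ∧
      (∫ ω, φ ω ∂P) ≤ α ∧ β = 1 - ∫ ω, φ ω ∂Q } := by
  refine ⟨1, fun _ => 0, measurable_const, fun ω => ⟨le_refl _, zero_le_one⟩, ?_, ?_⟩ <;>
    simp [hα]

/-- From `tradeoff P Q t < γ` extract a near-optimal test. -/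
lemma tradeoff_exists_lt (P Q : Measure Ω) [IsProbabilityMeasure Q] {t γ : ℝ}
    (ht : 0 ≤ t) (h : tradeoff P Q t < γ) :
    ∃ φ : Ω → ℝ, Measurable φ ∧ (∀ ω, φ ω ∈ Icc (0:ℝ) 1) ∧
      (∫ ω, φ ω ∂P) ≤ t ∧ 1 - (∫ ω, φ ω ∂Q) < γ := by
  obtain ⟨β, hβmem, hβlt⟩ := exists_lt_of_csInf_lt (tradeoff_set_nonempty P Q ht) h
  obtain ⟨φ, hm, hb, hintP, hβ⟩ := hβmem
  exact ⟨φ, hm, hb, hintP, hβ ▸ hβlt⟩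

end Aux

section KeyZero

variable {Ω : Type*} [MeasurableSpace Ω]

/-- The hard case `α = 0`: if tests `φ` exist with `∫ φ dP ≤ t` and `∫ (1-φ) dQ`
arbitrarily small, then `tradeoff Q P 0 ≤ t`. Uses the Lebesgue decomposition of
`P` with respect to `Q`. -/
lemma key_zero (P Q : Measure Ω) [IsProbabilityMeasure P] [IsProbabilityMeasure Q]
    {t : ℝ} (ht0 : 0 ≤ t)
    (h : ∀ δ : ℝ, 0 < δ → ∃ φ : Ω → ℝ, Measurable φ ∧ (∀ ω, φ ω ∈ Icc (0:ℝ) 1) ∧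
      (∫ ω, φ ω ∂P) ≤ t ∧ (∫ ω, (1 - φ ω) ∂Q) ≤ δ) :
    tradeoff Q P 0 ≤ t := by
  set h0 : Ω → ℝ≥0∞ := P.rnDeriv Q with hh0
  have hmeas : Measurable h0 := Measure.measurable_rnDeriv P Q
  set wd : Measure Ω := Q.withDensity h0 with hwd
  -- Step A : tradeoff Q P 0 ≤ (wd univ).toReal
  have hsing_add : P.singularPart Q + wd = P := Measure.singularPart_add_rnDeriv P Q
  have hfin : ∀ s : Set Ω, P.singularPart Q s ≠ ⊤ ∧ wd s ≠ ⊤ := by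
    intro s
    constructor
    · exact ne_top_of_le_ne_top (measure_ne_top P s)
        (Measure.le_iff'.1 (Measure.singularPart_le P Q) s)
    · exact ne_top_of_le_ne_top (measure_ne_top P s)
        (Measure.le_iff'.1 (Measure.withDensity_rnDeriv_le P Q) s)
  obtain ⟨u, hu, hsu, hqu⟩ := Measure.mutuallySingular_singularPart P Q
  have stepA : tradeoff Q P 0 ≤ (wd Set.univ).toReal := by
    set φ : Ω → ℝ := (uᶜ).indicator (fun _ => (1:ℝ)) with hφ
    have hφm : Measurable φ := measurable_const.indicator hu.compl
    have hφb : ∀ ω, φ ω ∈ Icc (0:ℝ) 1 := by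
      intro ω
      by_cases hω : ω ∈ uᶜ <;> simp [hφ, Set.indicator_apply, hω]
    have hφQ : (∫ ω, φ ω ∂Q) = 0 := by
      rw [hφ, integral_indicator_const (1:ℝ) hu.compl]
      simp [hqu, Measure.real]
    have hle : tradeoff Q P 0 ≤ 1 - ∫ ω, φ ω ∂P :=
      tradeoff_le Q P hφm hφb (by rw [hφQ])
    have hφP : (∫ ω, φ ω ∂P) = (P uᶜ).toReal := by
      rw [hφ, integral_indicator_const (1:ℝ) hu.compl]; simp [Measure.real]
    -- P uᶜ ≥ singularPart uᶜ = singularPart univ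
    have hsing_c : P.singularPart Q uᶜ = P.singularPart Q Set.univ := by
      have := measure_add_measure_compl (μ := P.singularPart Q) hu
      rw [hsu, zero_add] at this
      exact this
    have hsplit : (P.singularPart Q Set.univ).toReal + (wd Set.univ).toReal = 1 := by
      have : P.singularPart Q Set.univ + wd Set.univ = P Set.univ := by
        rw [← Measure.add_apply, hsing_add]
      have h1 : P Set.univ = 1 := measure_univ
      rw [h1] at this
      have := congrArg ENNReal.toReal this
      rwa [ENNReal.toReal_add (hfin _).1 (hfin _).2, ENNReal.toReal_one] at this
    have hPc : (P.singularPart Q Set.univ).toReal ≤ (P uᶜ).toReal := by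
      apply ENNReal.toReal_mono (measure_ne_top P _)
      rw [← hsing_c]
      exact Measure.le_iff'.1 (Measure.singularPart_le P Q) uᶜ
    have hPc1 : (P uᶜ).toReal ≤ 1 := by
      have := ENNReal.toReal_mono (measure_ne_top P Set.univ)
        (measure_mono (Set.subset_univ uᶜ))
      simpa using this
    rw [hφP] at hle
    linarith
  -- Step B : (wd univ).toReal ≤ t
  have hwd_univ : wd Set.univ = ∫⁻ ω, h0 ω ∂Q := by
    rw [hwd, withDensity_apply _ MeasurableSet.univ, setLIntegral_univ]
  have hm : ∀ n : ℕ, Measurable (fun ω => min (h0 ω) (n : ℝ≥0∞)) := fun n =>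
    hmeas.min measurable_const
  -- (2) each truncated integral is ≤ ofReal t
  have htrunc : ∀ n : ℕ, (∫⁻ ω, min (h0 ω) (n : ℝ≥0∞) ∂Q) ≤ ENNReal.ofReal t := by
    intro n
    apply ENNReal.le_of_forall_pos_le_add
    intro ε hε _
    have hδpos : (0:ℝ) < (ε : ℝ) / (n + 1) := by positivity
    obtain ⟨φ, hφm, hφb, hφP, hφQ⟩ := h _ hδpos
    set F : Ω → ℝ≥0∞ := fun ω => ENNReal.ofReal (φ ω) with hF
    have hFm : Measurable F := hφm.ennreal_ofReal
    have hF1 : ∀ ω, F ω ≤ 1 := fun ω => ENNReal.ofReal_le_one.2 (hφb ω).2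
    have hsplit : (∫⁻ ω, min (h0 ω) (n : ℝ≥0∞) ∂Q)
        = (∫⁻ ω, F ω * min (h0 ω) (n : ℝ≥0∞) ∂Q)
          + ∫⁻ ω, (1 - F ω) * min (h0 ω) (n : ℝ≥0∞) ∂Q := by
      rw [← lintegral_add_left (f := fun ω => F ω * min (h0 ω) (n : ℝ≥0∞)) (hFm.mul (hm n))]
      apply lintegral_congr
      intro ω
      have h1 : F ω + (1 - F ω) = 1 := by
        rw [add_comm]; exact tsub_add_cancel_of_le (hF1 ω)
      rw [← add_mul, h1, one_mul]
    -- first summand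
    have hint1 : (∫⁻ ω, F ω * min (h0 ω) (n : ℝ≥0∞) ∂Q) ≤ ENNReal.ofReal t := by
      have h1 : (∫⁻ ω, F ω * min (h0 ω) (n : ℝ≥0∞) ∂Q) ≤ ∫⁻ ω, h0 ω * F ω ∂Q := by
        apply lintegral_mono
        intro ω
        show F ω * min (h0 ω) (n : ℝ≥0∞) ≤ h0 ω * F ω
        rw [mul_comm (h0 ω)]
        exact mul_le_mul' le_rfl (min_le_left _ _)
      have h2 : (∫⁻ ω, h0 ω * F ω ∂Q) = ∫⁻ ω, F ω ∂wd :=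
        (lintegral_withDensity_eq_lintegral_mul Q hmeas hFm).symm
      have h3 : (∫⁻ ω, F ω ∂wd) ≤ ∫⁻ ω, F ω ∂P := by
        apply lintegral_mono' _ le_rfl
        rw [← hsing_add]
        exact Measure.le_add_left le_rfl
      have h4 : (∫⁻ ω, F ω ∂P) = ENNReal.ofReal (∫ ω, φ ω ∂P) :=
        (ofReal_integral_eq_lintegral_ofReal (aux_integrable P hφm hφb)
          (Eventually.of_forall fun ω => (hφb ω).1)).symm
      calc (∫⁻ ω, F ω * min (h0 ω) (n : ℝ≥0∞) ∂Q)
          ≤ ∫⁻ ω, h0 ω * F ω ∂Q := h1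
        _ = ∫⁻ ω, F ω ∂wd := h2
        _ ≤ ∫⁻ ω, F ω ∂P := h3
        _ = ENNReal.ofReal (∫ ω, φ ω ∂P) := h4
        _ ≤ ENNReal.ofReal t := ENNReal.ofReal_le_ofReal hφP
    -- second summand
    have hint2 : (∫⁻ ω, (1 - F ω) * min (h0 ω) (n : ℝ≥0∞) ∂Q) ≤ (ε : ℝ≥0∞) := by
      have h1 : (∫⁻ ω, (1 - F ω) * min (h0 ω) (n : ℝ≥0∞) ∂Q)
          ≤ ∫⁻ ω, (1 - F ω) * (n : ℝ≥0∞) ∂Q := by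
        apply lintegral_mono
        intro ω
        show (1 - F ω) * min (h0 ω) (n : ℝ≥0∞) ≤ (1 - F ω) * (n : ℝ≥0∞)
        exact mul_le_mul' le_rfl (min_le_right _ _)
      have h2 : (∫⁻ ω, (1 - F ω) * (n : ℝ≥0∞) ∂Q) = (∫⁻ ω, (1 - F ω) ∂Q) * n :=
        lintegral_mul_const _ (measurable_const.sub hFm)
      have h3 : (∫⁻ ω, (1 - F ω) ∂Q) = ENNReal.ofReal (∫ ω, (1 - φ ω) ∂Q) := by
        have hint : Integrable (fun ω => 1 - φ ω) Q := by
          exact (integrable_const (1:ℝ)).sub (aux_integrable Q hφm hφb)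
        rw [ofReal_integral_eq_lintegral_ofReal hint
          (Eventually.of_forall fun ω => by
            simp only [Pi.zero_apply]; linarith [(hφb ω).2])]
        apply lintegral_congr
        intro ω
        show 1 - F ω = ENNReal.ofReal (1 - φ ω)
        rw [ENNReal.ofReal_sub _ (hφb ω).1, ENNReal.ofReal_one]
      have h4 : ENNReal.ofReal (∫ ω, (1 - φ ω) ∂Q) * n ≤ (ε : ℝ≥0∞) := by
        have h5 : ENNReal.ofReal (∫ ω, (1 - φ ω) ∂Q) * n
            ≤ ENNReal.ofReal ((ε : ℝ) / (n + 1)) * n :=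
          mul_le_mul' (ENNReal.ofReal_le_ofReal hφQ) le_rfl
        have h6 : ENNReal.ofReal ((ε : ℝ) / (n + 1)) * n
            = ENNReal.ofReal ((ε : ℝ) / (n + 1) * n) := by
          rw [ENNReal.ofReal_mul (le_of_lt hδpos)]
          congr 1
          exact (ENNReal.ofReal_natCast n).symm
        have h7 : (ε : ℝ) / (n + 1) * n ≤ (ε : ℝ) := by
          rw [div_mul_eq_mul_div, div_le_iff₀ (by positivity)]
          nlinarith [ε.coe_nonneg]
        calc ENNReal.ofReal (∫ ω, (1 - φ ω) ∂Q) * n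
            ≤ ENNReal.ofReal ((ε : ℝ) / (n + 1)) * n := h5
          _ = ENNReal.ofReal ((ε : ℝ) / (n + 1) * n) := h6
          _ ≤ ENNReal.ofReal (ε : ℝ) := ENNReal.ofReal_le_ofReal h7
          _ = (ε : ℝ≥0∞) := ENNReal.ofReal_coe_nnreal
      calc (∫⁻ ω, (1 - F ω) * min (h0 ω) (n : ℝ≥0∞) ∂Q)
          ≤ ∫⁻ ω, (1 - F ω) * (n : ℝ≥0∞) ∂Q := h1
        _ = (∫⁻ ω, (1 - F ω) ∂Q) * n := h2
        _ = ENNReal.ofReal (∫ ω, (1 - φ ω) ∂Q) * n := by rw [h3]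
        _ ≤ (ε : ℝ≥0∞) := h4
    rw [hsplit]
    exact add_le_add hint1 hint2
  -- (1) monotone convergence
  have hsup : (∫⁻ ω, h0 ω ∂Q) = ⨆ n : ℕ, ∫⁻ ω, min (h0 ω) (n : ℝ≥0∞) ∂Q := by
    have hlt : ∀ᵐ ω ∂Q, h0 ω < ⊤ := Measure.rnDeriv_lt_top P Q
    have hcongr : (∫⁻ ω, h0 ω ∂Q) = ∫⁻ ω, ⨆ n : ℕ, min (h0 ω) (n : ℝ≥0∞) ∂Q := by
      apply lintegral_congr_ae
      filter_upwards [hlt] with ω hω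
      apply le_antisymm
      · obtain ⟨n, hn⟩ := ENNReal.exists_nat_gt hω.ne
        exact le_iSup_of_le n (le_min le_rfl hn.le)
      · exact iSup_le fun n => min_le_left _ _
    rw [hcongr, lintegral_iSup (fun n => hm n)]
    intro i j hij ω
    exact min_le_min le_rfl (by exact_mod_cast Nat.cast_le.2 hij)
  have stepB : (wd Set.univ).toReal ≤ t := by
    have h1 : wd Set.univ ≤ ENNReal.ofReal t := by
      rw [hwd_univ, hsup]
      exact iSup_le htrunc
    calc (wd Set.univ).toReal ≤ (ENNReal.ofReal t).toReal :=
          ENNReal.toReal_mono ENNReal.ofReal_ne_top h1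
      _ = t := ENNReal.toReal_ofReal ht0
  linarith

end KeyZero

/-- If `f = T(P,Q)`, then the left-continuous inverse
`f⁻¹(α) = inf{t ∈ [0,1] : f(t) ≤ α}` equals `T(Q,P)`. -/
theorem statement4 {Ω : Type*} [MeasurableSpace Ω] (P Q : Measure Ω)
    [IsProbabilityMeasure P] [IsProbabilityMeasure Q] :
    ∀ α ∈ Icc (0:ℝ) 1,
      sInf {t : ℝ | t ∈ Icc (0:ℝ) 1 ∧ tradeoff P Q t ≤ α} = tradeoff Q P α := by
  intro α hα
  obtain ⟨hα0, hα1⟩ := hα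
  set S : Set ℝ := {t : ℝ | t ∈ Icc (0:ℝ) 1 ∧ tradeoff P Q t ≤ α} with hSdef
  have hSbdd : BddBelow S := ⟨0, fun t ht => ht.1.1⟩
  have hSne : S.Nonempty := by
    refine ⟨1, ⟨⟨zero_le_one, le_rfl⟩, ?_⟩⟩
    have h1 : tradeoff P Q 1 ≤ 1 - ∫ ω, (fun _ => (1:ℝ)) ω ∂Q :=
      tradeoff_le P Q measurable_const (fun ω => ⟨zero_le_one, le_rfl⟩) (by simp)
    simp only [integral_const, probReal_univ, one_smul] at h1
    linarith
  apply le_antisymm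
  · -- sInf S ≤ tradeoff Q P α
    apply le_csInf (tradeoff_set_nonempty Q P hα0)
    rintro β ⟨φ, hm, hb, hintQ, rfl⟩
    have hintP0 := aux_int_nonneg P (φ := φ) hb
    have hintP1 := aux_int_le_one P hm hb
    set β := 1 - ∫ ω, φ ω ∂P with hβ
    have hβ01 : β ∈ Icc (0:ℝ) 1 := ⟨by linarith, by linarith⟩
    have hfβ : tradeoff P Q β ≤ α := by
      have h1 : tradeoff P Q β ≤ 1 - ∫ ω, (1 - φ ω) ∂Q := by
        apply tradeoff_le P Q (φ := fun ω => 1 - φ ω) (measurable_const.sub hm)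
          (fun ω => ⟨by linarith [(hb ω).2], by linarith [(hb ω).1]⟩)
        rw [integral_sub (integrable_const 1) (aux_integrable P hm hb)]
        simp [hβ]
      rw [integral_sub (integrable_const 1) (aux_integrable Q hm hb)] at h1
      simp only [integral_const, probReal_univ, one_smul] at h1
      linarith
    exact csInf_le hSbdd ⟨hβ01, hfβ⟩
  · -- tradeoff Q P α ≤ sInf S
    apply le_csInf hSne
    rintro t ⟨⟨ht0, ht1⟩, hft⟩
    rcases eq_or_lt_of_le hα0 with h0 | hpos
    · -- α = 0 : use the Lebesgue decomposition argument
      rw [← h0]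
      apply key_zero P Q ht0
      intro δ hδ
      have hlt : tradeoff P Q t < δ := lt_of_le_of_lt hft (h0 ▸ hδ)
      obtain ⟨φ, hm, hb, hintP, hlt'⟩ := tradeoff_exists_lt P Q ht0 hlt
      refine ⟨φ, hm, hb, hintP, ?_⟩
      rw [integral_sub (integrable_const 1) (aux_integrable Q hm hb)]
      simp only [integral_const, probReal_univ, one_smul]
      linarith
    · -- α > 0 : scaling argument
      apply le_of_forall_pos_le_add
      intro ε hε
      set c : ℝ := ε * α / (α + ε * α) with hc
      have hαε : 0 < α + ε * α := by positivity
      have hc0 : 0 ≤ c := by positivity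
      have hc1 : c ≤ 1 := by
        rw [hc, div_le_one hαε]; linarith
      have hcε : c ≤ ε := by
        rw [hc, div_le_iff₀ hαε]
        nlinarith [mul_pos (mul_pos hε hε) hpos]
      have hlt : tradeoff P Q t < α + ε * α := by
        have : 0 < ε * α := by positivity
        linarith
      obtain ⟨φ, hm, hb, hintP, hlt'⟩ := tradeoff_exists_lt P Q ht0 hlt
      set ψ : Ω → ℝ := fun ω => (1 - c) * φ ω + c with hψ
      have hψm : Measurable ψ := (measurable_const.mul hm).add measurable_const
      have hψb : ∀ ω, ψ ω ∈ Icc (0:ℝ) 1 := by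
        intro ω
        obtain ⟨h1, h2⟩ := hb ω
        constructor
        · have : 0 ≤ (1 - c) * φ ω := mul_nonneg (by linarith) h1
          simp only [hψ]; linarith
        · have : (1 - c) * φ ω ≤ (1 - c) * 1 := by
            apply mul_le_mul_of_nonneg_left h2 (by linarith)
          simp only [hψ]; linarith
      have hψint : ∀ (μ : Measure Ω) [IsProbabilityMeasure μ],
          (∫ ω, ψ ω ∂μ) = (1 - c) * (∫ ω, φ ω ∂μ) + c := by
        intro μ _
        rw [hψ]
        rw [integral_add ((aux_integrable μ hm hb).const_mul _) (integrable_const c),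
          integral_const_mul]
        simp
      -- 1 - ∫ψ dQ ≤ α
      have hQψ : 1 - (∫ ω, ψ ω ∂Q) ≤ α := by
        rw [hψint Q]
        have hkey : (1 - c) * (1 - ∫ ω, φ ω ∂Q) ≤ (1 - c) * (α + ε * α) :=
          mul_le_mul_of_nonneg_left (le_of_lt hlt') (by linarith)
        have hcval : c * (α + ε * α) = ε * α := by
          rw [hc, div_mul_eq_mul_div, mul_div_assoc, div_self hαε.ne', mul_one]
        nlinarith
      -- the witness for tradeoff Q P α
      have hmem : tradeoff Q P α ≤ 1 - ∫ ω, (1 - ψ ω) ∂P := by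
        apply tradeoff_le Q P (φ := fun ω => 1 - ψ ω) (measurable_const.sub hψm)
          (fun ω => ⟨by linarith [(hψb ω).2], by linarith [(hψb ω).1]⟩)
        rw [integral_sub (integrable_const 1) (aux_integrable Q hψm hψb)]
        simp only [integral_const, probReal_univ, one_smul]
        linarith
      rw [integral_sub (integrable_const 1) (aux_integrable P hψm hψb)] at hmem
      simp only [integral_const, probReal_univ, one_smul] at hmem
      rw [hψint P] at hmem
      have : (1 - c) * (∫ ω, φ ω ∂P) + c ≤ t + ε := by
        have h1 : (1 - c) * (∫ ω, φ ω ∂P) ≤ (1 - c) * t :=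
          mul_le_mul_of_nonneg_left hintP (by linarith)
        nlinarith
      linarith
end

section
/- Let f_{ε,δ}(α) = max{0, 1 − δ − e^ε α, e^{−ε}(1 − δ − α)} for ε ≥ 0 and δ ∈ [0,1]. Then a mechanism M satisfies (ε,δ)-differential privacy if and only if T(M(S), M(S')) ≥ f_{ε,δ} for all neighboring datasets S, S'. -/
open MeasureTheory ProbabilityTheory Set

/-- `f_{ε,δ}(α) = max{0, 1 - δ - e^ε α, e^{-ε}(1 - δ - α)}`. -/
noncomputable def fed (ε δ α : ℝ) : ℝ :=
  max 0 (max (1 - δ - Real.exp ε * α) (Real.exp (-ε) * (1 - δ - α)))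

section Aux

variable {Ω : Type*} [MeasurableSpace Ω]

lemma integrable_of_mem_Icc (μ : Measure Ω) [IsProbabilityMeasure μ] {φ : Ω → ℝ}
    (hφ : Measurable φ) (hφ01 : ∀ ω, φ ω ∈ Icc (0:ℝ) 1) : Integrable φ μ := by
  refine (integrable_const (1:ℝ)).mono' hφ.aestronglyMeasurable (ae_of_all _ fun ω => ?_)
  rw [Real.norm_eq_abs, abs_le]
  exact ⟨by linarith [(hφ01 ω).1], (hφ01 ω).2⟩

lemma integral_le_one (μ : Measure Ω) [IsProbabilityMeasure μ] {φ : Ω → ℝ}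
    (hφ : Measurable φ) (hφ01 : ∀ ω, φ ω ∈ Icc (0:ℝ) 1) : ∫ ω, φ ω ∂μ ≤ 1 := by
  have h := integral_mono (integrable_of_mem_Icc μ hφ hφ01) (integrable_const (1:ℝ))
    (fun ω => (hφ01 ω).2)
  simpa using h

lemma integral_nonneg_of_Icc (μ : Measure Ω) {φ : Ω → ℝ}
    (hφ01 : ∀ ω, φ ω ∈ Icc (0:ℝ) 1) : 0 ≤ ∫ ω, φ ω ∂μ :=
  integral_nonneg fun ω => (hφ01 ω).1

/-- The test-function version of approximate DP, from the event version via the layer cake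
formula. -/
lemma test_ineq (P Q : Measure Ω) [IsProbabilityMeasure P] [IsProbabilityMeasure Q]
    {ε δ : ℝ} (hδ : 0 ≤ δ)
    (hDP : ∀ E : Set Ω, MeasurableSet E → (Q E).toReal ≤ Real.exp ε * (P E).toReal + δ)
    {φ : Ω → ℝ} (hφ : Measurable φ) (hφ01 : ∀ ω, φ ω ∈ Icc (0:ℝ) 1) :
    ∫ ω, φ ω ∂Q ≤ Real.exp ε * (∫ ω, φ ω ∂P) + δ := by
  have hPint := integrable_of_mem_Icc P hφ hφ01
  have hQint := integrable_of_mem_Icc Q hφ hφ01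
  have hnn : 0 ≤ᵐ[P] φ := ae_of_all _ fun ω => (hφ01 ω).1
  have hnn' : 0 ≤ᵐ[Q] φ := ae_of_all _ fun ω => (hφ01 ω).1
  rw [hQint.integral_eq_integral_meas_lt hnn', hPint.integral_eq_integral_meas_lt hnn]
  set pP : ℝ → ℝ := fun t => (P {a | t < φ a}).toReal with hpP
  set pQ : ℝ → ℝ := fun t => (Q {a | t < φ a}).toReal with hpQ
  have hanti : ∀ (μ : Measure Ω) [IsProbabilityMeasure μ],
      Antitone fun t => (μ {a | t < φ a}).toReal := by
    intro μ _ s t hst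
    exact ENNReal.toReal_mono (measure_ne_top μ _)
      (measure_mono fun a (ha : t < φ a) => lt_of_le_of_lt hst ha)
  have hmeasP : Measurable pP := (hanti P).measurable
  have hmeasQ : Measurable pQ := (hanti Q).measurable
  have hzero : ∀ (μ : Measure Ω) (t : ℝ), 1 ≤ t → μ {a | t < φ a} = 0 := by
    intro μ t ht
    have : {a | t < φ a} = ∅ := by
      ext a; simp only [mem_setOf_eq, mem_empty_iff_false, iff_false, not_lt]
      exact le_trans (hφ01 a).2 ht
    simp [this]
  -- bound on (0, ∞)
  have hbd : ∀ t ∈ Ioi (0:ℝ),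
      pQ t ≤ Real.exp ε * pP t + (Ioc (0:ℝ) 1).indicator (fun _ => δ) t := by
    intro t ht
    by_cases h1 : t ≤ 1
    · have : (Ioc (0:ℝ) 1).indicator (fun _ => δ) t = δ :=
        indicator_of_mem (show t ∈ Ioc (0:ℝ) 1 from ⟨ht, h1⟩) _
      rw [this]
      exact hDP _ (measurableSet_lt measurable_const hφ)
    · have h1' : (1:ℝ) ≤ t := le_of_lt (not_le.mp h1)
      have : (Ioc (0:ℝ) 1).indicator (fun _ => δ) t = 0 :=
        indicator_of_notMem (fun hm => h1 hm.2) _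
      rw [this, hpQ]
      simp only [hzero Q t h1', ENNReal.toReal_zero, add_zero]
      positivity
  -- integrability of pP and pQ on (0, ∞)
  have hintAux : ∀ (μ : Measure Ω) [IsProbabilityMeasure μ],
      IntegrableOn (fun t => (μ {a | t < φ a}).toReal) (Ioi (0:ℝ)) := by
    intro μ hμ
    refine Integrable.mono' (g := (Ioc (0:ℝ) 1).indicator (fun _ => (1:ℝ))) ?_
      ((hanti μ).measurable.aestronglyMeasurable) ?_
    · rw [integrable_indicator_iff measurableSet_Ioc]
      refine (integrableOn_const_iff).mpr (Or.inr ?_)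
      calc (volume.restrict (Ioi (0:ℝ))) (Ioc 0 1) ≤ volume (Ioc (0:ℝ) 1) :=
            Measure.restrict_apply_le _ _
        _ < ⊤ := by simp
    · refine (ae_restrict_iff' measurableSet_Ioi).mpr (ae_of_all _ fun t ht => ?_)
      rw [Real.norm_eq_abs, abs_of_nonneg ENNReal.toReal_nonneg]
      by_cases h1 : t ≤ 1
      · rw [indicator_of_mem (show t ∈ Ioc (0:ℝ) 1 from ⟨ht, h1⟩)]
        exact ENNReal.toReal_le_of_le_ofReal zero_le_one (by simpa using prob_le_one)
      · rw [indicator_of_notMem (fun hm => h1 hm.2)]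
        simp [hzero μ t (le_of_lt (not_le.mp h1))]
  have hintP : IntegrableOn pP (Ioi (0:ℝ)) := hintAux P
  have hintQ : IntegrableOn pQ (Ioi (0:ℝ)) := hintAux Q
  have hind : Integrable ((Ioc (0:ℝ) 1).indicator (fun _ => δ)) (volume.restrict (Ioi 0)) := by
    rw [integrable_indicator_iff measurableSet_Ioc]
    refine (integrableOn_const_iff).mpr (Or.inr ?_)
    calc (volume.restrict (Ioi (0:ℝ))) (Ioc 0 1) ≤ volume (Ioc (0:ℝ) 1) :=
          Measure.restrict_apply_le _ _
      _ < ⊤ := by simp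
  have hintRHS : IntegrableOn
      (fun t => Real.exp ε * pP t + (Ioc (0:ℝ) 1).indicator (fun _ => δ) t) (Ioi (0:ℝ)) :=
    (hintP.const_mul _).add hind
  calc ∫ t in Ioi (0:ℝ), pQ t
      ≤ ∫ t in Ioi (0:ℝ), (Real.exp ε * pP t + (Ioc (0:ℝ) 1).indicator (fun _ => δ) t) :=
        setIntegral_mono_on hintQ hintRHS measurableSet_Ioi hbd
    _ = Real.exp ε * (∫ t in Ioi (0:ℝ), pP t) + δ := by
        rw [integral_add (hintP.const_mul _) hind, integral_const_mul,
          integral_indicator_const _ measurableSet_Ioc]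
        congr 1
        rw [measureReal_def, Measure.restrict_apply measurableSet_Ioc,
          inter_eq_left.mpr Ioc_subset_Ioi_self]
        simp

lemma prob_compl_toReal (μ : Measure Ω) [IsProbabilityMeasure μ] {E : Set Ω}
    (hE : MeasurableSet E) : (μ Eᶜ).toReal = 1 - (μ E).toReal := by
  have h := measure_add_measure_compl hE (μ := μ)
  have := congrArg ENNReal.toReal h
  rw [ENNReal.toReal_add (measure_ne_top μ _) (measure_ne_top μ _)] at this
  simp only [measure_univ, ENNReal.toReal_one] at this
  linarith

end Aux

/-- A mechanism `M` is `(ε,δ)`-DP if and only if `T(M(S), M(S')) ≥ f_{ε,δ}` for all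
neighboring datasets `S, S'`. -/
theorem statement6 {X Ω : Type*} [MeasurableSpace Ω] (Neighbor : X → X → Prop)
    (hN : Symmetric Neighbor) (M : X → Measure Ω)
    (hM : ∀ S, IsProbabilityMeasure (M S)) (ε δ : ℝ) (hε : 0 ≤ ε) (hδ : δ ∈ Icc (0:ℝ) 1) :
    (∀ S S', Neighbor S S' → ∀ E : Set Ω, MeasurableSet E →
        (M S E).toReal ≤ Real.exp ε * (M S' E).toReal + δ) ↔
      (∀ S S', Neighbor S S' → ∀ α ∈ Icc (0:ℝ) 1, fed ε δ α ≤ tradeoff (M S) (M S') α) := by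
  have hδ0 := hδ.1
  constructor
  · intro hDP S S' hSS' α hα
    haveI := hM S; haveI := hM S'
    set P := M S with hP; set Q := M S' with hQ
    refine le_csInf ⟨1, fun _ => 0, measurable_const,
      fun ω => ⟨le_refl _, zero_le_one⟩, by simpa using hα.1, by simp⟩ ?_
    rintro β ⟨φ, hφm, hφ01, hφα, rfl⟩
    have hQ1 := integral_le_one Q hφm hφ01
    have hP0 := integral_nonneg_of_Icc P hφ01
    -- branch A : ∫φ dQ ≤ e^ε ∫φ dP + δ, from DP for (S', S)
    have hA : ∫ ω, φ ω ∂Q ≤ Real.exp ε * (∫ ω, φ ω ∂P) + δ :=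
      test_ineq P Q hδ0 (fun E hE => hDP S' S (hN hSS') E hE) hφm hφ01
    -- branch B : apply test version to 1 - φ with roles swapped
    have hψ01 : ∀ ω, (1 - φ ω) ∈ Icc (0:ℝ) 1 :=
      fun ω => ⟨by linarith [(hφ01 ω).2], by linarith [(hφ01 ω).1]⟩
    have hB : ∫ ω, (1 - φ ω) ∂P ≤ Real.exp ε * (∫ ω, (1 - φ ω) ∂Q) + δ :=
      test_ineq Q P hδ0 (fun E hE => hDP S S' hSS' E hE)
        (measurable_const.sub hφm) hψ01
    have hsubP : ∫ ω, (1 - φ ω) ∂P = 1 - ∫ ω, φ ω ∂P := by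
      rw [integral_sub (integrable_const 1) (integrable_of_mem_Icc P hφm hφ01)]
      simp
    have hsubQ : ∫ ω, (1 - φ ω) ∂Q = 1 - ∫ ω, φ ω ∂Q := by
      rw [integral_sub (integrable_const 1) (integrable_of_mem_Icc Q hφm hφ01)]
      simp
    rw [hsubP, hsubQ] at hB
    have hexp : Real.exp ε * Real.exp (-ε) = 1 := by
      rw [← Real.exp_add]; simp
    have hexppos := Real.exp_pos ε
    have hexppos' := Real.exp_pos (-ε)
    refine max_le (by linarith) (max_le ?_ ?_)
    · nlinarith [mul_le_mul_of_nonneg_left hφα (le_of_lt hexppos)]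
    · -- e^{-ε} (1 - δ - α) ≤ 1 - ∫φdQ
      have h1 : 1 - δ - α ≤ Real.exp ε * (1 - ∫ ω, φ ω ∂Q) := by linarith
      nlinarith [mul_le_mul_of_nonneg_left h1 (le_of_lt hexppos')]
  · intro h S S' hSS' E hE
    haveI := hM S; haveI := hM S'
    set P := M S with hP; set Q := M S' with hQ
    set α : ℝ := (P Eᶜ).toReal with hα
    have hPE := prob_compl_toReal P hE
    have hQE := prob_compl_toReal Q hE
    have hα01 : α ∈ Icc (0:ℝ) 1 := by
      constructor
      · exact ENNReal.toReal_nonneg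
      · exact ENNReal.toReal_le_of_le_ofReal zero_le_one (by simpa using prob_le_one)
    have hkey := h S S' hSS' α hα01
    -- the indicator of Eᶜ is an admissible test
    have hmem : (Q E).toReal ∈ { β : ℝ | ∃ φ : Ω → ℝ, Measurable φ ∧
        (∀ ω, φ ω ∈ Icc (0:ℝ) 1) ∧ (∫ ω, φ ω ∂P) ≤ α ∧ β = 1 - ∫ ω, φ ω ∂Q } := by
      refine ⟨(Eᶜ).indicator (fun _ => 1), measurable_const.indicator hE.compl,
        fun ω => ?_, ?_, ?_⟩
      · by_cases hω : ω ∈ Eᶜ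
        · rw [indicator_of_mem hω]; exact ⟨zero_le_one, le_refl _⟩
        · rw [indicator_of_notMem hω]; exact ⟨le_refl _, zero_le_one⟩
      · rw [integral_indicator_const _ hE.compl]; simp [hα, measureReal_def]
      · rw [integral_indicator_const _ hE.compl]; simp [hQE, measureReal_def]
    have hbdd : BddBelow { β : ℝ | ∃ φ : Ω → ℝ, Measurable φ ∧
        (∀ ω, φ ω ∈ Icc (0:ℝ) 1) ∧ (∫ ω, φ ω ∂P) ≤ α ∧ β = 1 - ∫ ω, φ ω ∂Q } := by
      refine ⟨0, ?_⟩
      rintro β ⟨φ, hφm, hφ01, _, rfl⟩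
      have := integral_le_one Q hφm hφ01
      linarith
    have htrade : tradeoff P Q α ≤ (Q E).toReal := csInf_le hbdd hmem
    have hfed : Real.exp (-ε) * (1 - δ - α) ≤ fed ε δ α :=
      le_max_of_le_right (le_max_right _ _)
    have h2 : Real.exp (-ε) * (1 - δ - α) ≤ (Q E).toReal := by
      calc Real.exp (-ε) * (1 - δ - α) ≤ fed ε δ α := hfed
        _ ≤ tradeoff P Q α := hkey
        _ ≤ (Q E).toReal := htrade
    have hexp : Real.exp ε * Real.exp (-ε) = 1 := by
      rw [← Real.exp_add]; simp
    have hexppos := Real.exp_pos ε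
    have h3 := mul_le_mul_of_nonneg_left h2 (le_of_lt hexppos)
    have h1α : 1 - α = (P E).toReal := by rw [hα, hPE]; ring
    rw [← mul_assoc, hexp, one_mul] at h3
    linarith
end

section
/- The function f_{ε,δ}(α) = max{0, 1 − δ − e^ε α, e^{−ε}(1 − δ − α)} is a symmetric trade-off function: it is convex, continuous, non-increasing, satisfies f_{ε,δ}(α) ≤ 1 − α, and equals its own left-continuous inverse. -/
/-!
Each of the three pieces of `f = f_{ε,δ}` is affine and non-increasing, so `f` is convex,
continuous and antitone. The key inequality is `f (f t) ≤ t` for `t ≥ 0`: the two affine pieces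
are inverse to each other, `1 - δ - e^ε s = t ↔ s = e^{-ε} (1 - δ - t)`. For an antitone
self-map of `[0,1]` this inequality makes `f` its own left-continuous inverse:
`f α` lies in `{t | f t ≤ α}`, and every `t` there satisfies `f α ≤ f (f t) ≤ t`.
-/

open Set

lemma convexOn_mul_add {s : Set ℝ} (hs : Convex ℝ s) (a b : ℝ) :
    ConvexOn ℝ s (fun x => a * x + b) :=
  ((LinearMap.mul ℝ ℝ a).convexOn hs).add_const b

lemma sInf_setOf_le_eq_of_antitoneOn {f : ℝ → ℝ} (hf : AntitoneOn f (Icc 0 1))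
    (hmaps : MapsTo f (Icc 0 1) (Icc 0 1)) (hff : ∀ t ∈ Icc (0 : ℝ) 1, f (f t) ≤ t)
    {α : ℝ} (hα : α ∈ Icc (0 : ℝ) 1) :
    sInf {t : ℝ | t ∈ Icc (0 : ℝ) 1 ∧ f t ≤ α} = f α := by
  have hmem : f α ∈ {t : ℝ | t ∈ Icc (0 : ℝ) 1 ∧ f t ≤ α} := ⟨hmaps hα, hff α hα⟩
  refine le_antisymm (csInf_le ⟨0, fun t ht => ht.1.1⟩ hmem) (le_csInf ⟨_, hmem⟩ ?_)
  rintro t ⟨ht, hft⟩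
  exact (hf (hmaps ht) hα hft).trans (hff t ht)

section

variable (ε δ : ℝ)

lemma fed_nonneg (α : ℝ) : 0 ≤ fed ε δ α := le_max_left _ _

lemma continuous_fed : Continuous (fed ε δ) := by
  unfold fed
  fun_prop

lemma antitone_fed : Antitone (fed ε δ) := by
  intro a b hab
  unfold fed
  gcongr

lemma convexOn_fed : ConvexOn ℝ univ (fed ε δ) := by
  have h₁ : ConvexOn ℝ univ (fun α => 1 - δ - Real.exp ε * α) := by
    convert convexOn_mul_add convex_univ (-Real.exp ε) (1 - δ) using 2; ring
  have h₂ : ConvexOn ℝ univ (fun α => Real.exp (-ε) * (1 - δ - α)) := by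
    convert convexOn_mul_add convex_univ (-Real.exp (-ε)) (Real.exp (-ε) * (1 - δ)) using 2; ring
  exact (convexOn_const 0 convex_univ).sup (h₁.sup h₂)

variable {ε δ}

lemma fed_le_one_sub (hε : 0 ≤ ε) (hδ : 0 ≤ δ) {α : ℝ} (hα : α ∈ Icc (0 : ℝ) 1) :
    fed ε δ α ≤ 1 - α := by
  obtain ⟨hα₀, hα₁⟩ := hα
  have hexp : 1 ≤ Real.exp ε := Real.one_le_exp hε
  have hexp_neg : Real.exp (-ε) ≤ 1 := Real.exp_le_one_iff.mpr (neg_nonpos.mpr hε)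
  have hexp_neg_pos := Real.exp_pos (-ε)
  refine max_le (by linarith) (max_le (by nlinarith) ?_)
  rcases le_or_gt (1 - δ - α) 0 with h | h <;> nlinarith

lemma mapsTo_fed (hε : 0 ≤ ε) (hδ : 0 ≤ δ) : MapsTo (fed ε δ) (Icc 0 1) (Icc 0 1) := fun α hα =>
  ⟨fed_nonneg ε δ α, (fed_le_one_sub hε hδ hα).trans (by linarith [hα.1])⟩

lemma fed_fed_le {t : ℝ} (ht : 0 ≤ t) : fed ε δ (fed ε δ t) ≤ t := by
  have hexp_mul : Real.exp ε * Real.exp (-ε) = 1 := by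
    rw [← Real.exp_add, add_neg_cancel, Real.exp_zero]
  have h₁ : 1 - δ - Real.exp ε * t ≤ fed ε δ t := (le_max_left _ _).trans (le_max_right _ _)
  have h₂ : Real.exp (-ε) * (1 - δ - t) ≤ fed ε δ t := (le_max_right _ _).trans (le_max_right _ _)
  refine max_le ht (max_le ?_ ?_)
  · linear_combination Real.exp ε * h₂ - (1 - δ - t) * hexp_mul
  · linear_combination Real.exp (-ε) * h₁ + t * hexp_mul

end

/-- `f_{ε,δ}` is a symmetric trade-off function: convex, continuous, non-increasing,
below `1 - α` on `[0,1]`, and equal to its own left-continuous inverse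
`α ↦ inf{t ∈ [0,1] : f_{ε,δ}(t) ≤ α}`. -/
theorem statement7 (ε δ : ℝ) (hε : 0 ≤ ε) (hδ : δ ∈ Icc (0:ℝ) 1) :
    ConvexOn ℝ (Icc (0:ℝ) 1) (fed ε δ) ∧
    ContinuousOn (fed ε δ) (Icc (0:ℝ) 1) ∧
    AntitoneOn (fed ε δ) (Icc (0:ℝ) 1) ∧
    (∀ α ∈ Icc (0:ℝ) 1, fed ε δ α ≤ 1 - α) ∧
    (∀ α ∈ Icc (0:ℝ) 1, sInf {t : ℝ | t ∈ Icc (0:ℝ) 1 ∧ fed ε δ t ≤ α} = fed ε δ α) :=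
  ⟨(convexOn_fed ε δ).subset (subset_univ _) (convex_Icc 0 1),
    (continuous_fed ε δ).continuousOn,
    (antitone_fed ε δ).antitoneOn _,
    fun _ hα => fed_le_one_sub hε hδ.1 hα,
    fun _ hα => sInf_setOf_le_eq_of_antitoneOn ((antitone_fed ε δ).antitoneOn _)
      (mapsTo_fed hε hδ.1) (fun _ ht => fed_fed_le ht.1) hα⟩
end

section
/- Let θ be a real-valued statistic with finite sensitivity sens(θ) = sup over neighboring datasets S,S' of |θ(S) − θ(S')|. The Gaussian mechanism M(S) = θ(S) + ξ with ξ ~ N(0, sens(θ)²/μ²) satisfies μ-GDP, i.e., T(M(S), M(S')) ≥ G_μ for all neighboring S, S'. -/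
open MeasureTheory ProbabilityTheory Set

noncomputable def stdNormCDF (x : ℝ) : ℝ := cdf (gaussianReal 0 1) x

noncomputable def stdNormCDFInv (p : ℝ) : ℝ := sInf {x : ℝ | p ≤ stdNormCDF x}

noncomputable def Gmu (μ α : ℝ) : ℝ :=
  if α ≤ 0 then 1 else if 1 ≤ α then 0 else stdNormCDF (stdNormCDFInv (1 - α) - μ)

open scoped NNReal ENNReal

lemma monotone_stdNormCDF : Monotone stdNormCDF := fun _ _ h => (monotone_cdf _) h

lemma continuous_stdNormCDF : Continuous stdNormCDF := by
  rw [continuous_iff_continuousAt]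
  intro x
  rw [monotone_stdNormCDF.continuousAt_iff_leftLim_eq_rightLim]
  have hr : Function.rightLim stdNormCDF x = stdNormCDF x := (cdf (gaussianReal 0 1)).rightLim_eq x
  have hsing : (cdf (gaussianReal 0 1)).measure {x} = 0 := by
    rw [measure_cdf]
    exact (gaussianReal_absolutelyContinuous 0 one_ne_zero) (measure_singleton x)
  rw [StieltjesFunction.measure_singleton, ENNReal.ofReal_eq_zero, sub_nonpos] at hsing
  have hl : Function.leftLim stdNormCDF x ≤ stdNormCDF x :=
    monotone_stdNormCDF.leftLim_le le_rfl
  rw [hr]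
  exact le_antisymm hl hsing

lemma stdNormCDF_inv_spec {p : ℝ} (hp0 : 0 < p) (hp1 : p < 1) :
    stdNormCDF (stdNormCDFInv p) = p := by
  set S := {x : ℝ | p ≤ stdNormCDF x} with hS
  have hclosed : IsClosed S := isClosed_le continuous_const continuous_stdNormCDF
  obtain ⟨z, hz⟩ := (((tendsto_cdf_atTop (gaussianReal 0 1)).eventually (eventually_gt_nhds hp1)).exists)
  have hzS : z ∈ S := le_of_lt hz
  obtain ⟨y, hy⟩ := (((tendsto_cdf_atBot (gaussianReal 0 1)).eventually (eventually_lt_nhds hp0)).exists)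
  have hbdd : BddBelow S := by
    refine ⟨y, fun w hw => ?_⟩
    by_contra hwy
    push_neg at hwy
    exact absurd (le_trans hw (monotone_stdNormCDF hwy.le)) (not_le.2 hy)
  have htmem : stdNormCDFInv p ∈ S := hclosed.csInf_mem ⟨z, hzS⟩ hbdd
  refine le_antisymm ?_ htmem
  by_contra h
  push_neg at h
  have hyt : y ≤ stdNormCDFInv p := by
    by_contra hyt
    push_neg at hyt
    exact absurd (monotone_stdNormCDF hyt.le) (not_le.2 (lt_of_lt_of_le hy htmem))
  obtain ⟨x, hx, hxp⟩ := intermediate_value_Icc hyt continuous_stdNormCDF.continuousOn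
    ⟨hy.le, h.le⟩
  have : stdNormCDFInv p ≤ x := csInf_le hbdd hxp.ge
  have hxt : x = stdNormCDFInv p := le_antisymm hx.2 this
  rw [hxt] at hxp
  exact absurd hxp (ne_of_gt h)

lemma cdf_gaussianReal (m t : ℝ) : cdf (gaussianReal m 1) t = stdNormCDF (t - m) := by
  unfold stdNormCDF
  rw [cdf_eq_real, cdf_eq_real, measureReal_def, measureReal_def]
  congr 1
  have h : gaussianReal m 1 = (gaussianReal 0 1).map (· + m) := by
    rw [gaussianReal_map_add_const]; norm_num
  rw [h, Measure.map_apply (measurable_add_const m) measurableSet_Iic]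
  congr 1
  ext x
  simp [sub_le_iff_le_add]

lemma integral_gaussianReal {m : ℝ} {v : ℝ≥0} (hv : v ≠ 0) (f : ℝ → ℝ) :
    ∫ x, f x ∂(gaussianReal m v) = ∫ x, gaussianPDFReal m v x * f x := by
  rw [gaussianReal_of_var_ne_zero _ hv]
  have h : gaussianPDF m v = fun x => ((Real.toNNReal (gaussianPDFReal m v x) : ℝ≥0) : ℝ≥0∞) :=
    rfl
  rw [h, integral_withDensity_eq_integral_smul
    ((measurable_gaussianPDFReal m v).real_toNNReal) f]
  congr 1
  ext x
  simp [NNReal.smul_def, smul_eq_mul, Real.coe_toNNReal _ (gaussianPDFReal_nonneg m v x)]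

lemma toReal_gaussianReal_Ici {m : ℝ} {v : ℝ≥0} (hv : v ≠ 0) (t : ℝ) :
    ((gaussianReal m v) (Ici t)).toReal = 1 - cdf (gaussianReal m v) t := by
  set P := gaussianReal m v
  have hIoi : P (Ici t) = P (Ioi t) := by
    refine le_antisymm ?_ (measure_mono Ioi_subset_Ici_self)
    calc P (Ici t) = P ({t} ∪ Ioi t) := by rw [singleton_union, Ioi_insert]
    _ ≤ P {t} + P (Ioi t) := measure_union_le _ _
    _ = P (Ioi t) := by
        rw [(gaussianReal_absolutelyContinuous m hv) (measure_singleton t), zero_add]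
  have hsum : P (Iic t) + P (Ioi t) = 1 := by
    rw [← measure_union (Iic_disjoint_Ioi le_rfl) measurableSet_Ioi, Iic_union_Ioi,
      measure_univ]
  have h1 : (P (Iic t)).toReal + (P (Ioi t)).toReal = 1 := by
    rw [← ENNReal.toReal_add (measure_ne_top _ _) (measure_ne_top _ _), hsum, ENNReal.toReal_one]
  rw [hIoi, cdf_eq_real, measureReal_def]
  linarith

lemma pdf_shift (ν x : ℝ) :
    gaussianPDFReal ν 1 x = gaussianPDFReal 0 1 x * Real.exp (ν * x - ν ^ 2 / 2) := by
  simp only [gaussianPDFReal, NNReal.coe_one, mul_one, sub_zero]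
  rw [mul_assoc, ← Real.exp_add]
  ring_nf

lemma key0 {ν α μ : ℝ} (hν0 : 0 ≤ ν) (hνμ : ν ≤ μ) (hα0 : 0 < α) (hα1 : α < 1)
    {φ : ℝ → ℝ} (hφm : Measurable φ) (hφ0 : ∀ x, 0 ≤ φ x) (hφ1 : ∀ x, φ x ≤ 1)
    (hP : ∫ x, φ x ∂(gaussianReal 0 1) ≤ α) :
    ∫ x, φ x ∂(gaussianReal ν 1) ≤ 1 - stdNormCDF (stdNormCDFInv (1 - α) - μ) := by
  set t := stdNormCDFInv (1 - α) with ht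
  have hΦt : stdNormCDF t = 1 - α := stdNormCDF_inv_spec (by linarith) (by linarith)
  set p := gaussianPDFReal 0 1 with hp
  set q := gaussianPDFReal ν 1 with hq
  set k := Real.exp (ν * t - ν ^ 2 / 2) with hkdef
  have hk : 0 < k := Real.exp_pos _
  have hip : Integrable p := integrable_gaussianPDFReal 0 1
  have hiq : Integrable q := integrable_gaussianPDFReal ν 1
  have hipφ : Integrable (fun x => p x * φ x) := by
    refine hip.mono' ((measurable_gaussianPDFReal 0 1).mul hφm).aestronglyMeasurable
      (ae_of_all _ fun x => ?_)
    rw [norm_mul, Real.norm_of_nonneg (gaussianPDFReal_nonneg _ _ x),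
      Real.norm_of_nonneg (hφ0 x)]
    exact mul_le_of_le_one_right (gaussianPDFReal_nonneg _ _ x) (hφ1 x)
  have hiqφ : Integrable (fun x => q x * φ x) := by
    refine hiq.mono' ((measurable_gaussianPDFReal ν 1).mul hφm).aestronglyMeasurable
      (ae_of_all _ fun x => ?_)
    rw [norm_mul, Real.norm_of_nonneg (gaussianPDFReal_nonneg _ _ x),
      Real.norm_of_nonneg (hφ0 x)]
    exact mul_le_of_le_one_right (gaussianPDFReal_nonneg _ _ x) (hφ1 x)
  have hind : Integrable (Set.indicator (Ici t) (fun x => q x - k * p x)) :=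
    (hiq.sub (hip.const_mul k)).indicator measurableSet_Ici
  have hptw : ∀ x, q x * φ x - k * (p x * φ x) ≤
      Set.indicator (Ici t) (fun x => q x - k * p x) x := by
    intro x
    have hqk : q x - k * p x = p x * (Real.exp (ν * x - ν ^ 2 / 2) - k) := by
      rw [hq, pdf_shift ν x, ← hp]; ring
    by_cases hx : x ∈ Ici t
    · rw [indicator_of_mem hx]
      have htx : t ≤ x := hx
      have hD : 0 ≤ q x - k * p x := by
        rw [hqk]
        apply mul_nonneg (gaussianPDFReal_nonneg _ _ _)
        rw [sub_nonneg, hkdef]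
        apply Real.exp_le_exp.2
        nlinarith
      calc q x * φ x - k * (p x * φ x) = (q x - k * p x) * φ x := by ring
      _ ≤ (q x - k * p x) * 1 := mul_le_mul_of_nonneg_left (hφ1 x) hD
      _ = q x - k * p x := mul_one _
    · rw [indicator_of_notMem hx]
      have htx : x ≤ t := le_of_not_ge fun h => hx h
      have hD : q x - k * p x ≤ 0 := by
        rw [hqk]
        apply mul_nonpos_of_nonneg_of_nonpos (gaussianPDFReal_nonneg _ _ _)
        rw [sub_nonpos, hkdef]
        apply Real.exp_le_exp.2
        nlinarith
      calc q x * φ x - k * (p x * φ x) = (q x - k * p x) * φ x := by ring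
      _ ≤ 0 := mul_nonpos_of_nonpos_of_nonneg hD (hφ0 x)
  have hint : (∫ x, (q x * φ x - k * (p x * φ x))) ≤
      ∫ x, Set.indicator (Ici t) (fun x => q x - k * p x) x :=
    integral_mono ((hiqφ.sub (hipφ.const_mul k))) hind hptw
  rw [integral_sub hiqφ (hipφ.const_mul k), integral_const_mul,
    integral_indicator measurableSet_Ici] at hint
  have hsplit : ∫ x in Ici t, (q x - k * p x) =
      (∫ x in Ici t, q x) - k * ∫ x in Ici t, p x := by
    rw [integral_sub hiq.restrict ((hip.const_mul k)).restrict, integral_const_mul]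
  have hQI : ∫ x in Ici t, q x = 1 - stdNormCDF (t - ν) := by
    have h1 := gaussianReal_apply_eq_integral ν (one_ne_zero (α := ℝ≥0)) (Ici t)
    have h2 : ((gaussianReal ν 1) (Ici t)).toReal = ∫ x in Ici t, q x := by
      rw [h1, ENNReal.toReal_ofReal
        (setIntegral_nonneg measurableSet_Ici fun x _ => gaussianPDFReal_nonneg _ _ x)]
    rw [← h2, toReal_gaussianReal_Ici one_ne_zero, cdf_gaussianReal]
  have hPI : ∫ x in Ici t, p x = α := by
    have h1 := gaussianReal_apply_eq_integral 0 (one_ne_zero (α := ℝ≥0)) (Ici t)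
    have h2 : ((gaussianReal 0 1) (Ici t)).toReal = ∫ x in Ici t, p x := by
      rw [h1, ENNReal.toReal_ofReal
        (setIntegral_nonneg measurableSet_Ici fun x _ => gaussianPDFReal_nonneg _ _ x)]
    rw [← h2, toReal_gaussianReal_Ici one_ne_zero, cdf_gaussianReal, sub_zero, hΦt]
    ring
  rw [integral_gaussianReal one_ne_zero φ] at hP
  rw [integral_gaussianReal one_ne_zero φ]
  have hΦmono : stdNormCDF (t - μ) ≤ stdNormCDF (t - ν) :=
    monotone_stdNormCDF (by linarith)
  rw [hsplit, hQI, hPI] at hint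
  have hkI : k * (∫ x, p x * φ x) ≤ k * α := mul_le_mul_of_nonneg_left hP hk.le
  have hgoal : (∫ x, q x * φ x) ≤ 1 - stdNormCDF (t - ν) := by linarith
  linarith

lemma integrable_of_bdd {P : Measure ℝ} [IsProbabilityMeasure P] {φ : ℝ → ℝ}
    (hφm : Measurable φ) (h0 : ∀ x, 0 ≤ φ x) (h1 : ∀ x, φ x ≤ 1) : Integrable φ P :=
  (integrable_const 1).mono' hφm.aestronglyMeasurable (ae_of_all _ fun x => by
    rw [Real.norm_of_nonneg (h0 x)]; exact h1 x)

lemma Gmu_le_one_sub {μ α : ℝ} (hμ : 0 ≤ μ) (hα0 : 0 ≤ α) (hα1 : α ≤ 1) :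
    Gmu μ α ≤ 1 - α := by
  unfold Gmu
  split_ifs with h1 h2
  · linarith
  · linarith
  · push_neg at h1 h2
    have hs := stdNormCDF_inv_spec (p := 1 - α) (by linarith) (by linarith)
    calc stdNormCDF (stdNormCDFInv (1 - α) - μ) ≤ stdNormCDF (stdNormCDFInv (1 - α)) :=
      monotone_stdNormCDF (by linarith)
    _ = 1 - α := hs

/-- The Gaussian mechanism `M(S) = θ(S) + N(0, c²/μ²)`, where `c` bounds the sensitivity
of `θ` over neighboring datasets, is `μ`-GDP: `T(M(S), M(S')) ≥ G_μ` for all neighbors. -/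
theorem statement9 {X : Type*} (Neighbor : X → X → Prop) (θ : X → ℝ) (c μ : ℝ)
    (hμ : 0 < μ) (hsens : ∀ S S', Neighbor S S' → |θ S - θ S'| ≤ c) :
    ∀ S S', Neighbor S S' → ∀ α ∈ Icc (0:ℝ) 1,
      Gmu μ α ≤
        tradeoff (gaussianReal (θ S) (Real.toNNReal (c ^ 2 / μ ^ 2)))
          (gaussianReal (θ S') (Real.toNNReal (c ^ 2 / μ ^ 2))) α := by
  intro S S' hN α hα
  obtain ⟨hα0, hα1⟩ := hα
  set a := θ S with ha
  set b := θ S' with hb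
  set v : ℝ≥0 := Real.toNNReal (c ^ 2 / μ ^ 2) with hv
  have habs : |a - b| ≤ c := hsens S S' hN
  have hc0 : 0 ≤ c := le_trans (abs_nonneg _) habs
  refine le_csInf ⟨1, fun _ => 0, measurable_const, fun ω => ⟨le_rfl, zero_le_one⟩,
    by simpa using hα0, by simp⟩ ?_
  rintro β ⟨φ, hφm, hφ01, hφP, rfl⟩
  have hφ0 : ∀ x, 0 ≤ φ x := fun x => (hφ01 x).1
  have hφ1 : ∀ x, φ x ≤ 1 := fun x => (hφ01 x).2
  suffices h : ∫ x, φ x ∂(gaussianReal b v) ≤ 1 - Gmu μ α by linarith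
  by_cases hc : c = 0
  · have hab : a = b := by
      rw [hc] at habs
      have := abs_nonneg (a - b)
      have h0 : |a - b| = 0 := le_antisymm habs this
      have := abs_eq_zero.1 h0
      linarith
    rw [← hab]
    calc ∫ x, φ x ∂(gaussianReal a v) ≤ α := hφP
    _ ≤ 1 - Gmu μ α := by linarith [Gmu_le_one_sub hμ.le hα0 hα1]
  · have hcpos : 0 < c := lt_of_le_of_ne hc0 (Ne.symm hc)
    have hvpos : (0:ℝ) < c ^ 2 / μ ^ 2 := by positivity
    have hvne : v ≠ 0 := by
      rw [hv, ← Real.toNNReal_zero, ne_eq, Real.toNNReal_eq_toNNReal_iff hvpos.le le_rfl]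
      exact hvpos.ne'
    have hvco : (v : ℝ) = c ^ 2 / μ ^ 2 := Real.coe_toNNReal _ hvpos.le
    set σ := Real.sqrt (c ^ 2 / μ ^ 2) with hσ
    have hσpos : 0 < σ := Real.sqrt_pos.2 hvpos
    have hσsq : σ ^ 2 = (v : ℝ) := by rw [hσ, Real.sq_sqrt hvpos.le, hvco]
    have hσμ : σ * μ = c := by
      rw [hσ, show c ^ 2 / μ ^ 2 = (c / μ) ^ 2 by ring,
        Real.sqrt_sq (div_nonneg hc0 hμ.le)]
      field_simp
    have hmap : ∀ m : ℝ, (gaussianReal 0 1).map (fun x => σ * x + m) = gaussianReal m v := by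
      intro m
      have h1 : (fun x : ℝ => σ * x + m) = (fun x => x + m) ∘ (fun x => σ * x) := rfl
      rw [h1, ← Measure.map_map (measurable_add_const m) (measurable_const_mul σ)]
      have h2 : (gaussianReal 0 1).map (fun x => σ * x) = gaussianReal 0 v := by
        have h3 := gaussianReal_map_const_mul (μ := 0) (v := 1) σ
        rw [show ((σ * ·)) = (fun x => σ * x) from rfl] at h3
        rw [h3, mul_zero]
        congr 1
        refine NNReal.coe_injective ?_
        push_cast
        rw [mul_one]
        exact hσsq
      rw [h2, gaussianReal_map_add_const, zero_add]
    have hIm : ∀ m : ℝ, ∫ x, φ x ∂(gaussianReal m v)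
        = ∫ x, φ (σ * x + m) ∂(gaussianReal 0 1) := by
      intro m
      rw [← hmap m, integral_map ((measurable_const_mul σ).add_const m).aemeasurable
        hφm.aestronglyMeasurable]
    set ψ := fun x => φ (σ * x + a) with hψ
    have hψm : Measurable ψ := hφm.comp ((measurable_const_mul σ).add_const a)
    have hψ0 : ∀ x, 0 ≤ ψ x := fun x => hφ0 _
    have hψ1 : ∀ x, ψ x ≤ 1 := fun x => hφ1 _
    have hψP : ∫ x, ψ x ∂(gaussianReal 0 1) ≤ α := by rw [← hIm a]; exact hφP
    set ν := (b - a) / σ with hν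
    have hνabs : |ν| ≤ μ := by
      rw [hν, abs_div, abs_of_pos hσpos, div_le_iff₀ hσpos, abs_sub_comm]
      calc |a - b| ≤ c := habs
      _ = μ * σ := by rw [← hσμ]; ring
    have hQ : ∫ x, φ x ∂(gaussianReal b v) = ∫ x, ψ x ∂(gaussianReal ν 1) := by
      rw [hIm b]
      have h1 : gaussianReal ν 1 = (gaussianReal 0 1).map (· + ν) := by
        rw [gaussianReal_map_add_const, zero_add]
      rw [h1, integral_map (measurable_add_const ν).aemeasurable hψm.aestronglyMeasurable]
      congr 1
      funext x
      show φ (σ * x + b) = φ (σ * (x + ν) + a)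
      congr 1
      rw [hν]
      field_simp
      ring
    rcases le_or_gt α 0 with hA | hA
    · have hGA : Gmu μ α = 1 := by simp [Gmu, hA]
      rw [hGA]
      have hiφ : Integrable φ (gaussianReal a v) := integrable_of_bdd hφm hφ0 hφ1
      have hint0 : ∫ x, φ x ∂(gaussianReal a v) = 0 :=
        le_antisymm (hφP.trans hA) (integral_nonneg hφ0)
      have hae : φ =ᵐ[gaussianReal a v] 0 :=
        (integral_eq_zero_iff_of_nonneg hφ0 hiφ).1 hint0
      have hae2 : φ =ᵐ[volume] 0 :=
        hae.filter_mono (gaussianReal_absolutelyContinuous' a hvne).ae_le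
      have hae3 : φ =ᵐ[gaussianReal b v] 0 :=
        hae2.filter_mono (gaussianReal_absolutelyContinuous b hvne).ae_le
      rw [integral_congr_ae hae3]
      simp
    rcases le_or_gt 1 α with hB | hB
    · have hGB : Gmu μ α = 0 := by simp [Gmu, not_le.2 hA, hB]
      rw [hGB]
      have hiφ : Integrable φ (gaussianReal b v) := integrable_of_bdd hφm hφ0 hφ1
      calc ∫ x, φ x ∂(gaussianReal b v) ≤ ∫ _, (1:ℝ) ∂(gaussianReal b v) :=
        integral_mono hiφ (integrable_const 1) hφ1
      _ = 1 := by simp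
      _ = 1 - 0 := by ring
    · have hG : Gmu μ α = stdNormCDF (stdNormCDFInv (1 - α) - μ) := by
        simp [Gmu, not_le.2 hA, not_le.2 hB]
      rw [hG, hQ]
      rcases le_or_gt 0 ν with hνpos | hνneg
      · exact key0 hνpos (le_trans (le_abs_self ν) hνabs) hA hB hψm hψ0 hψ1 hψP
      · have hmapneg : ∀ m : ℝ, (gaussianReal m 1).map (fun x => -x) = gaussianReal (-m) 1 := by
          intro m
          have h3 := gaussianReal_map_const_mul (μ := m) (v := 1) (-1)
          rw [show (((-1:ℝ) * ·)) = (fun x : ℝ => -x) by funext x; ring] at h3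
          rw [h3, neg_one_mul]
          congr 1
          refine NNReal.coe_injective ?_
          push_cast
          norm_num
        have hrefl : ∀ m : ℝ, ∫ x, ψ (-x) ∂(gaussianReal (-m) 1)
            = ∫ x, ψ x ∂(gaussianReal m 1) := by
          intro m
          rw [← hmapneg m, integral_map (f := fun x => ψ (-x))
            (measurable_neg : Measurable fun x : ℝ => -x).aemeasurable
            ((hψm.comp measurable_neg).aestronglyMeasurable)]
          simp
        have h1 : ∫ x, ψ (-x) ∂(gaussianReal 0 1) ≤ α := by
          have h2 := hrefl 0
          rw [neg_zero] at h2
          rw [h2]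
          have h4 : gaussianReal (0:ℝ) 1 = gaussianReal 0 1 := rfl
          exact hψP
        have h2 := key0 (ν := -ν) (φ := fun x => ψ (-x)) (by linarith)
          (le_trans (neg_le_abs ν) hνabs) hA hB
          (hψm.comp measurable_neg) (fun x => hψ0 _) (fun x => hψ1 _) h1
        rw [← hrefl ν]
        exact h2
end

section
/- For a symmetric trade-off function f extended by f(x) = +∞ for x outside [0,1], a mechanism is f-DP if and only if it is (ε, δ(ε))-DP for all ε ≥ 0 with δ(ε) = 1 + f*(−e^ε), where f*(y) = sup_x (yx − f(x)) is the convex conjugate. -/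
open MeasureTheory ProbabilityTheory Set

/-- The convex conjugate `f*(y) = sup_{x} (y·x - f(x))` of a trade-off function extended
by `+∞` off `[0,1]`, i.e. the supremum is effectively over `x ∈ [0,1]`. -/
noncomputable def tfConj (f : ℝ → ℝ) (y : ℝ) : ℝ :=
  sSup ((fun x => y * x - f x) '' Icc (0:ℝ) 1)

/-! ### Auxiliary lemmas -/

lemma tfConj_le {f : ℝ → ℝ} {y c : ℝ} (h : ∀ t ∈ Icc (0:ℝ) 1, y * t - f t ≤ c) :
    tfConj f y ≤ c := by
  apply csSup_le
  · exact ⟨y * 0 - f 0, ⟨0, ⟨le_refl 0, zero_le_one⟩, rfl⟩⟩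
  · rintro β ⟨t, ht, rfl⟩; exact h t ht

lemma le_tfConj {f : ℝ → ℝ} (hnn : ∀ x ∈ Icc (0:ℝ) 1, 0 ≤ f x) {y : ℝ} (hy : y ≤ 0)
    {t : ℝ} (ht : t ∈ Icc (0:ℝ) 1) : y * t - f t ≤ tfConj f y := by
  apply le_csSup
  · refine ⟨0, ?_⟩
    rintro β ⟨u, hu, rfl⟩
    show y * u - f u ≤ 0
    have h1 := hnn u hu
    nlinarith [hu.1, hu.2, mul_nonpos_of_nonpos_of_nonneg hy hu.1]
  · exact ⟨t, ht, rfl⟩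

lemma integrable_of_bdd_s11 {Ω : Type*} [MeasurableSpace Ω] (P : Measure Ω)
    [IsProbabilityMeasure P] {φ : Ω → ℝ} (hφ : Measurable φ)
    (hb : ∀ ω, φ ω ∈ Icc (0:ℝ) 1) : Integrable φ P := by
  refine (integrable_const (1:ℝ)).mono' hφ.aestronglyMeasurable
    (Filter.Eventually.of_forall fun ω => ?_)
  rw [Real.norm_eq_abs, abs_of_nonneg (hb ω).1]
  exact (hb ω).2

lemma integral_test_mem_Icc {Ω : Type*} [MeasurableSpace Ω] (P : Measure Ω)
    [IsProbabilityMeasure P] {φ : Ω → ℝ} (hφ : Measurable φ)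
    (hb : ∀ ω, φ ω ∈ Icc (0:ℝ) 1) : (∫ ω, φ ω ∂P) ∈ Icc (0:ℝ) 1 := by
  constructor
  · exact integral_nonneg fun ω => (hb ω).1
  · calc (∫ ω, φ ω ∂P) ≤ ∫ _, (1:ℝ) ∂P :=
          integral_mono (integrable_of_bdd_s11 P hφ hb) (integrable_const 1) fun ω => (hb ω).2
    _ = 1 := by simp

/-- From the set-level `(C, δ)` inequality to the test-level inequality, via layer cake. -/
lemma test_dp {Ω : Type*} [MeasurableSpace Ω] (P Q : Measure Ω)
    [IsProbabilityMeasure P] [IsProbabilityMeasure Q] (C δ : ℝ)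
    (h : ∀ E : Set Ω, MeasurableSet E → (P E).toReal ≤ C * (Q E).toReal + δ)
    {φ : Ω → ℝ} (hφ : Measurable φ) (hb : ∀ ω, φ ω ∈ Icc (0:ℝ) 1) :
    ∫ ω, φ ω ∂P ≤ C * ∫ ω, φ ω ∂Q + δ := by
  have hmeas : ∀ t : ℝ, MeasurableSet {a : Ω | t ≤ φ a} :=
    fun t => measurableSet_le measurable_const hφ
  have hlayer : ∀ (μ : Measure Ω), IsProbabilityMeasure μ →
      ∫ ω, φ ω ∂μ = ∫ t in Ioc (0:ℝ) 1, (μ {a : Ω | t ≤ φ a}).toReal := by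
    intro μ hμ
    exact (integrable_of_bdd_s11 μ hφ hb).integral_eq_integral_Ioc_meas_le
      (Filter.Eventually.of_forall fun ω => (hb ω).1)
      (Filter.Eventually.of_forall fun ω => (hb ω).2)
  have hint : ∀ (μ : Measure Ω), IsProbabilityMeasure μ →
      IntegrableOn (fun t => (μ {a : Ω | t ≤ φ a}).toReal) (Ioc (0:ℝ) 1) := by
    intro μ hμ
    have hm : Measurable fun t : ℝ => (μ {a : Ω | t ≤ φ a}).toReal := by
      apply Measurable.ennreal_toReal
      exact Antitone.measurable fun s t hst => measure_mono fun a ha => le_trans hst ha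
    refine (integrable_const (1:ℝ)).mono' hm.aestronglyMeasurable
      (Filter.Eventually.of_forall fun t => ?_)
    rw [Real.norm_eq_abs, abs_of_nonneg ENNReal.toReal_nonneg]
    calc (μ {a : Ω | t ≤ φ a}).toReal ≤ (1 : ENNReal).toReal :=
          ENNReal.toReal_mono ENNReal.one_ne_top prob_le_one
    _ = 1 := by simp
  rw [hlayer P inferInstance, hlayer Q inferInstance]
  calc ∫ t in Ioc (0:ℝ) 1, (P {a : Ω | t ≤ φ a}).toReal
      ≤ ∫ t in Ioc (0:ℝ) 1, (C * (Q {a : Ω | t ≤ φ a}).toReal + δ) :=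
        integral_mono (hint P inferInstance)
          (((hint Q inferInstance).const_mul C).add (integrable_const δ))
          fun t => h _ (hmeas t)
  _ = C * (∫ t in Ioc (0:ℝ) 1, (Q {a : Ω | t ≤ φ a}).toReal) + δ := by
        rw [integral_add ((hint Q inferInstance).const_mul C) (integrable_const δ),
          integral_const_mul, integral_const]
        simp [Real.volume_Ioc]

/-- The key convex-duality lemma. -/
lemma key_duality (f : ℝ → ℝ)
    (hconv : ConvexOn ℝ (Icc (0:ℝ) 1) f) (hcont : ContinuousOn f (Icc (0:ℝ) 1))
    (hanti : AntitoneOn f (Icc (0:ℝ) 1)) (hle : ∀ x ∈ Icc (0:ℝ) 1, f x ≤ 1 - x)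
    (hnn : ∀ x ∈ Icc (0:ℝ) 1, 0 ≤ f x)
    (hsymm : ∀ α ∈ Icc (0:ℝ) 1, sInf {t : ℝ | t ∈ Icc (0:ℝ) 1 ∧ f t ≤ α} = f α)
    (x y : ℝ) (hx : x ∈ Icc (0:ℝ) 1) (hy : y ≤ 1)
    (I1 : ∀ ε : ℝ, 0 ≤ ε → y ≤ Real.exp ε * x + (1 + tfConj f (-(Real.exp ε))))
    (I2 : ∀ ε : ℝ, 0 ≤ ε → 1 - x ≤ Real.exp ε * (1 - y) + (1 + tfConj f (-(Real.exp ε)))) :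
    f x ≤ 1 - y := by
  have h01 : (0:ℝ) ∈ Icc (0:ℝ) 1 := ⟨le_refl 0, zero_le_one⟩
  have h11 : (1:ℝ) ∈ Icc (0:ℝ) 1 := ⟨zero_le_one, le_refl 1⟩
  have f1 : f 1 = 0 := le_antisymm (by simpa using hle 1 h11) (hnn 1 h11)
  have f0le : f 0 ≤ 1 := by simpa using hle 0 h01
  -- suffices to prove it up to any positive error η
  by_contra hcon
  push_neg at hcon
  set η : ℝ := (f x - (1 - y)) / 2 with hηdef
  have hη : 0 < η := by rw [hηdef]; linarith
  have hgoal : f x ≤ 1 - y + η → False := by rw [hηdef]; intro h'; linarith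
  apply hgoal
  rcases eq_or_lt_of_le hx.1 with hx0 | hx0
  · -- case x = 0 : continuity argument at 0
    have hc : ContinuousWithinAt f (Icc (0:ℝ) 1) x := hcont x hx
    obtain ⟨d, hd, hball⟩ := Metric.continuousWithinAt_iff.mp hc η hη
    set a : ℝ := min (d/2) 1 with hadef
    have ha0 : 0 < a := lt_min (by linarith) one_pos
    have ha1 : a ≤ 1 := min_le_right _ _
    have haI : a ∈ Icc (0:ℝ) 1 := ⟨ha0.le, ha1⟩
    have hdist : dist a x < d := by
      rw [← hx0, Real.dist_eq, sub_zero, abs_of_nonneg ha0.le]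
      have := min_le_left (d/2) 1
      linarith
    have hfa : |f a - f x| < η := by
      have := hball haI hdist
      rwa [Real.dist_eq] at this
    have hfa' : f x - η < f a := by
      have := (abs_lt.mp hfa).1
      linarith
    have hainv : 1 ≤ a⁻¹ := by
      have h1 : a * a⁻¹ = 1 := mul_inv_cancel₀ ha0.ne'
      nlinarith [inv_pos.mpr ha0]
    set ε : ℝ := Real.log a⁻¹ with hεdef
    have hε : 0 ≤ ε := Real.log_nonneg hainv
    have hexp : Real.exp ε = a⁻¹ := Real.exp_log (inv_pos.mpr ha0)
    have hconj : tfConj f (-a⁻¹) ≤ -(f x - η) := by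
      apply tfConj_le
      intro t ht
      rcases le_or_gt t a with hta | hta
      · have hfat : f a ≤ f t := hanti ht haI hta
        nlinarith [mul_nonneg (inv_pos.mpr ha0).le ht.1]
      · have h2 : a⁻¹ * a ≤ a⁻¹ * t :=
          mul_le_mul_of_nonneg_left hta.le (inv_pos.mpr ha0).le
        have h3 : a⁻¹ * a = 1 := inv_mul_cancel₀ ha0.ne'
        have h4 := hnn t ht
        have h5 : f x ≤ f 0 := by rw [← hx0]
        linarith [f0le, h5]
    have hI1 := I1 ε hε
    rw [hexp] at hI1
    have hx0' : x = 0 := hx0.symm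
    rw [hx0'] at hI1 ⊢
    have : -(a⁻¹) = -a⁻¹ := by ring
    rw [this] at hI1
    linarith [hconj, hI1]
  · -- case 0 < x : chord argument
    have hc : ContinuousWithinAt f (Icc (0:ℝ) 1) x := hcont x hx
    obtain ⟨d, hd, hball⟩ := Metric.continuousWithinAt_iff.mp hc η hη
    set a : ℝ := max 0 (x - d/2) with hadef
    have ha0 : 0 ≤ a := le_max_left _ _
    have hax : a < x := max_lt hx0 (by linarith)
    have haI : a ∈ Icc (0:ℝ) 1 := ⟨ha0, le_trans hax.le hx.2⟩
    have hdist : dist a x < d := by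
      rw [Real.dist_eq, abs_of_nonpos (by linarith)]
      have := le_max_right 0 (x - d/2)
      linarith
    have hfa : |f a - f x| < η := by
      have := hball haI hdist
      rwa [Real.dist_eq] at this
    have hfax : f x ≤ f a := hanti haI hx hax.le
    have hfa' : f a - f x < η := by
      rw [abs_of_nonneg (by linarith)] at hfa
      linarith
    have hxa : (0:ℝ) < x - a := by linarith
    set s : ℝ := (f x - f a) / (x - a) with hsdef
    have hs0 : s ≤ 0 := div_nonpos_of_nonpos_of_nonneg (by linarith) hxa.le
    have hs_eq : s * (x - a) = f x - f a := div_mul_cancel₀ _ hxa.ne'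
    -- the supporting chord line lies below f on [0,1], up to error η
    have L : ∀ t ∈ Icc (0:ℝ) 1, f x - η + s * (t - x) ≤ f t := by
      intro t ht
      have e2 : s * (a - x) = f a - f x := by linear_combination -hs_eq
      rcases lt_trichotomy t a with h1 | h1 | h1
      · have hsl := hconv.slope_mono_adjacent ht hx h1 hax
        rw [← hsdef] at hsl
        have h2 : f a - f t ≤ s * (a - t) := by
          rw [div_le_iff₀ (by linarith)] at hsl
          linarith
        have e1 : s * (t - x) = s * (t - a) + s * (a - x) := by ring
        have e3 : s * (a - t) = -(s * (t - a)) := by ring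
        linarith
      · rw [h1]
        linarith
      · rcases lt_trichotomy t x with h2 | h2 | h2
        · have hft : f x ≤ f t := hanti ht hx h2.le
          have h4 : s * (t - x) ≤ s * (a - x) :=
            mul_le_mul_of_nonpos_left (by linarith) hs0
          linarith
        · rw [h2]
          have : s * (x - x) = 0 := by ring
          linarith
        · have hsl := hconv.slope_mono_adjacent haI ht hax h2
          rw [← hsdef] at hsl
          have h3 : s * (t - x) ≤ f t - f x := (le_div_iff₀ (by linarith)).mp hsl
          linarith
    rcases le_or_gt s (-1) with hs1 | hs1
    · -- steep slope: use I1
      set ε : ℝ := Real.log (-s) with hεdef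
      have hexp : Real.exp ε = -s := Real.exp_log (by linarith)
      have hε : 0 ≤ ε := Real.log_nonneg (by linarith)
      have hneg : -(Real.exp ε) = s := by rw [hexp]; ring
      have hconj : tfConj f s ≤ s * x - f x + η := by
        apply tfConj_le
        intro t ht
        have hL := L t ht
        have e : s * (t - x) = s * t - s * x := by ring
        linarith
      have hI1 := I1 ε hε
      rw [hneg, hexp] at hI1
      linarith
    · rcases lt_or_eq_of_le hs0 with hsneg | hseq
      · -- shallow negative slope: use symmetry and I2
        have hsne : s ≠ 0 := hsneg.ne
        have hinv : s * s⁻¹ = 1 := mul_inv_cancel₀ hsne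
        have hsinvneg : s⁻¹ < 0 := inv_lt_zero.mpr hsneg
        have hsinv_le : s⁻¹ ≤ -1 := by nlinarith
        -- the reflected line lies below f on [0,1]
        have M : ∀ u ∈ Icc (0:ℝ) 1, x + (u - (f x - η)) * s⁻¹ ≤ f u := by
          intro u hu
          rw [← hsymm u hu]
          have hmem : (1:ℝ) ∈ {t : ℝ | t ∈ Icc (0:ℝ) 1 ∧ f t ≤ u} :=
            ⟨h11, by rw [f1]; exact hu.1⟩
          apply le_csInf ⟨1, hmem⟩
          rintro t ⟨htI, hft⟩
          have hL := L t htI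
          have h5 : s * (t - x) ≤ u - (f x - η) := by linarith
          have h6 : s⁻¹ * (u - (f x - η)) ≤ s⁻¹ * (s * (t - x)) :=
            mul_le_mul_of_nonpos_left h5 hsinvneg.le
          have h7 : s⁻¹ * (s * (t - x)) = t - x := by
            field_simp
          linarith
        set ε : ℝ := Real.log (-s⁻¹) with hεdef
        have hexp : Real.exp ε = -s⁻¹ := Real.exp_log (by linarith)
        have hε : 0 ≤ ε := Real.log_nonneg (by linarith)
        have hconj : tfConj f s⁻¹ ≤ (f x - η) * s⁻¹ - x := by
          apply tfConj_le
          intro t ht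
          have hM := M t ht
          have e : (t - (f x - η)) * s⁻¹ = s⁻¹ * t - (f x - η) * s⁻¹ := by ring
          linarith
        have hI2 := I2 ε hε
        rw [hexp] at hI2
        have hnegneg : -(-s⁻¹) = s⁻¹ := by ring
        rw [hnegneg] at hI2
        -- 1 - x ≤ -s⁻¹ * (1 - y) + 1 + (f x - η) * s⁻¹ - x
        have h8 : 0 ≤ (-s⁻¹) * ((1 - y) - (f x - η)) := by nlinarith [hI2, hconj]
        have h9 : (0:ℝ) < -s⁻¹ := by linarith
        by_contra hA
        push_neg at hA
        have h10 : (1 - y) - (f x - η) < 0 := by linarith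
        nlinarith
      · -- zero slope: f x ≤ η
        have hL := L 1 h11
        rw [f1] at hL
        have : s * (1 - x) = 0 := by rw [hseq]; ring
        linarith
  done

/-- Primal-to-dual: for a symmetric trade-off function `f`, a mechanism is `f`-DP if and
only if it is `(ε, δ(ε))`-DP for all `ε ≥ 0` with `δ(ε) = 1 + f*(-e^ε)`. -/
theorem statement11 {X Ω : Type*} [MeasurableSpace Ω] (Neighbor : X → X → Prop)
    (hN : Symmetric Neighbor) (M : X → Measure Ω) (hM : ∀ S, IsProbabilityMeasure (M S))
    (f : ℝ → ℝ)
    (hconv : ConvexOn ℝ (Icc (0:ℝ) 1) f) (hcont : ContinuousOn f (Icc (0:ℝ) 1))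
    (hanti : AntitoneOn f (Icc (0:ℝ) 1)) (hle : ∀ x ∈ Icc (0:ℝ) 1, f x ≤ 1 - x)
    (hnn : ∀ x ∈ Icc (0:ℝ) 1, 0 ≤ f x)
    (hsymm : ∀ α ∈ Icc (0:ℝ) 1, sInf {t : ℝ | t ∈ Icc (0:ℝ) 1 ∧ f t ≤ α} = f α) :
    (∀ S S', Neighbor S S' → ∀ α ∈ Icc (0:ℝ) 1, f α ≤ tradeoff (M S) (M S') α) ↔
      (∀ ε : ℝ, 0 ≤ ε → ∀ S S', Neighbor S S' → ∀ E : Set Ω, MeasurableSet E →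
        (M S E).toReal ≤ Real.exp ε * (M S' E).toReal + (1 + tfConj f (-(Real.exp ε)))) := by
  have hM' : ∀ S, ∀ E : Set Ω, (M S E).toReal ∈ Icc (0:ℝ) 1 := by
    intro S E
    have := hM S
    refine ⟨ENNReal.toReal_nonneg, ?_⟩
    calc (M S E).toReal ≤ (1 : ENNReal).toReal :=
          ENNReal.toReal_mono ENNReal.one_ne_top prob_le_one
    _ = 1 := by simp
  constructor
  · -- forward direction
    intro hDP ε hε S S' hS E hE
    have hMS := hM S; have hMS' := hM S'
    set α₀ := (M S' E).toReal with hα₀def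
    have hα₀ : α₀ ∈ Icc (0:ℝ) 1 := hM' S' E
    have h1 : f α₀ ≤ tradeoff (M S') (M S) α₀ := hDP S' S (hN hS) α₀ hα₀
    have hφm : Measurable (E.indicator (1 : Ω → ℝ)) := measurable_const.indicator hE
    have hφb : ∀ ω, (E.indicator (1 : Ω → ℝ)) ω ∈ Icc (0:ℝ) 1 := by
      intro ω
      by_cases hω : ω ∈ E <;> simp [Set.indicator_apply, hω]
    have h2 : tradeoff (M S') (M S) α₀ ≤ 1 - (M S E).toReal := by
      apply csInf_le
      · refine ⟨0, ?_⟩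
        rintro β ⟨φ, hm, hb, _, rfl⟩
        have := (integral_test_mem_Icc (M S) hm hb).2
        linarith
      · refine ⟨E.indicator (1 : Ω → ℝ), hφm, hφb, ?_, ?_⟩
        · rw [integral_indicator_one hE]; exact le_of_eq rfl
        · rw [integral_indicator_one hE]; rfl
    have h3 : -(Real.exp ε) * α₀ - f α₀ ≤ tfConj f (-(Real.exp ε)) :=
      le_tfConj hnn (neg_nonpos.mpr (Real.exp_pos ε).le) hα₀
    linarith
  · -- backward direction
    intro hDP S S' hS α hα
    have hMS := hM S; have hMS' := hM S'
    refine le_csInf ⟨1, fun _ => (0:ℝ), measurable_const,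
      fun ω => ⟨le_refl 0, zero_le_one⟩, by simpa using hα.1, by simp⟩ ?_
    rintro β ⟨φ, hφm, hφb, hφα, rfl⟩
    set x := ∫ ω, φ ω ∂(M S) with hxdef
    set y := ∫ ω, φ ω ∂(M S') with hydef
    have hxI : x ∈ Icc (0:ℝ) 1 := integral_test_mem_Icc (M S) hφm hφb
    have hyI : y ∈ Icc (0:ℝ) 1 := integral_test_mem_Icc (M S') hφm hφb
    have hfx : f α ≤ f x := hanti hxI hα hφα
    have hψm : Measurable fun ω => 1 - φ ω := measurable_const.sub hφm
    have hψb : ∀ ω, (1 - φ ω) ∈ Icc (0:ℝ) 1 := fun ω => ⟨by linarith [(hφb ω).2],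
      by linarith [(hφb ω).1]⟩
    have hψP : ∫ ω, (1 - φ ω) ∂(M S) = 1 - x := by
      rw [integral_sub (integrable_const 1) (integrable_of_bdd_s11 (M S) hφm hφb)]
      simp [hxdef]
    have hψQ : ∫ ω, (1 - φ ω) ∂(M S') = 1 - y := by
      rw [integral_sub (integrable_const 1) (integrable_of_bdd_s11 (M S') hφm hφb)]
      simp [hydef]
    have I1 : ∀ ε : ℝ, 0 ≤ ε → y ≤ Real.exp ε * x + (1 + tfConj f (-(Real.exp ε))) := by
      intro ε hε
      exact test_dp (M S') (M S) (Real.exp ε) _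
        (fun E hE => hDP ε hε S' S (hN hS) E hE) hφm hφb
    have I2 : ∀ ε : ℝ, 0 ≤ ε →
        1 - x ≤ Real.exp ε * (1 - y) + (1 + tfConj f (-(Real.exp ε))) := by
      intro ε hε
      have := test_dp (M S) (M S') (Real.exp ε) _
        (fun E hE => hDP ε hε S S' hS E hE) hψm hψb
      rwa [hψP, hψQ] at this
    have := key_duality f hconv hcont hanti hle hnn hsymm x y hxI hyI.2 I1 I2
    linarith
end

section
/- Define f ⊗̂ g(x) := f(1 − g(x)) for trade-off functions f, g. If f and g are trade-off functions, then f ⊗̂ g is a trade-off function, and (f ⊗̂ g)⁻¹ = (g⁻¹) ⊗̂ (f⁻¹). -/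
/-!
The map `1 - g` is concave, nondecreasing and sends `[0,1]` into itself, so composing it with the
convex antitone `f` gives a convex antitone function; the bound `f (1 - g x) ≤ f x ≤ 1 - x` comes
from `g x ≤ 1 - x`.
For the inverse, the continuity of a trade-off function `f` makes `{t | f t ≤ α}` closed, so its
infimum `f⁻¹(α)` is attained and `f⁻¹(α) ≤ t ↔ f t ≤ α` on `[0,1]`. Chaining this Galois
connection for `f ⊗̂ g`, `f` and `g` shows that both sides of the identity have the same upper
sets in `[0,1]`.
-/

open Set

/-- The left-continuous inverse `f⁻¹(α) = inf{t ∈ [0,1] : f(t) ≤ α}`. -/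
noncomputable def tfInv (f : ℝ → ℝ) (α : ℝ) : ℝ :=
  sInf {t : ℝ | t ∈ Icc (0:ℝ) 1 ∧ f t ≤ α}

structure IsTradeOff (f : ℝ → ℝ) : Prop where
  convexOn : ConvexOn ℝ (Icc 0 1) f
  continuousOn : ContinuousOn f (Icc 0 1)
  antitoneOn : AntitoneOn f (Icc 0 1)
  le_one_sub : ∀ x ∈ Icc (0:ℝ) 1, f x ≤ 1 - x
  nonneg : ∀ x ∈ Icc (0:ℝ) 1, 0 ≤ f x

section tfInv

variable {f : ℝ → ℝ} {α t : ℝ}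

lemma tfInv_le_of_apply_le (ht : t ∈ Icc (0:ℝ) 1) (hft : f t ≤ α) : tfInv f α ≤ t :=
  csInf_le ⟨0, fun _ hs => hs.1.1⟩ ⟨ht, hft⟩

lemma tfInv_mem_Icc_and_apply_le (hf : ContinuousOn f (Icc 0 1)) (h1 : f 1 ≤ α) :
    tfInv f α ∈ Icc (0:ℝ) 1 ∧ f (tfInv f α) ≤ α := by
  have hclosed : IsClosed {t : ℝ | t ∈ Icc (0:ℝ) 1 ∧ f t ≤ α} :=
    hf.preimage_isClosed_of_isClosed isClosed_Icc isClosed_Iic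
  exact hclosed.csInf_mem ⟨1, right_mem_Icc.2 zero_le_one, h1⟩ ⟨0, fun _ hs => hs.1.1⟩

lemma tfInv_le_iff (hcont : ContinuousOn f (Icc 0 1)) (hanti : AntitoneOn f (Icc 0 1))
    (h1 : f 1 ≤ α) (ht : t ∈ Icc (0:ℝ) 1) : tfInv f α ≤ t ↔ f t ≤ α := by
  obtain ⟨hmem, hle⟩ := tfInv_mem_Icc_and_apply_le hcont h1
  exact ⟨fun h => (hanti hmem ht h).trans hle, tfInv_le_of_apply_le ht⟩

end tfInv

namespace IsTradeOff

variable {f g : ℝ → ℝ} {α : ℝ}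

lemma apply_one_le (hf : IsTradeOff f) (hα : 0 ≤ α) : f 1 ≤ α := by
  linarith [hf.le_one_sub 1 (right_mem_Icc.2 zero_le_one)]

lemma tfInv_mem_Icc (hf : IsTradeOff f) (hα : 0 ≤ α) : tfInv f α ∈ Icc (0:ℝ) 1 :=
  (tfInv_mem_Icc_and_apply_le hf.continuousOn (hf.apply_one_le hα)).1

lemma tfInv_le_iff (hf : IsTradeOff f) (hα : 0 ≤ α) {t : ℝ} (ht : t ∈ Icc (0:ℝ) 1) :
    tfInv f α ≤ t ↔ f t ≤ α :=
  _root_.tfInv_le_iff hf.continuousOn hf.antitoneOn (hf.apply_one_le hα) ht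

lemma mapsTo_one_sub (hg : IsTradeOff g) :
    MapsTo (fun x => 1 - g x) (Icc (0:ℝ) 1) (Icc (0:ℝ) 1) := fun x hx => by
  have := hg.le_one_sub x hx
  have := hg.nonneg x hx
  constructor <;> linarith [hx.1]

lemma comp_one_sub (hf : IsTradeOff f) (hg : IsTradeOff g) :
    IsTradeOff (fun x => f (1 - g x)) := by
  have hmaps := hg.mapsTo_one_sub
  have hcont : ContinuousOn (fun x => 1 - g x) (Icc 0 1) :=
    continuousOn_const.sub hg.continuousOn
  have hanti : AntitoneOn (fun x => f (1 - g x)) (Icc 0 1) := fun x hx y hy hxy =>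
    hf.antitoneOn (hmaps hx) (hmaps hy) (by linarith [hg.antitoneOn hx hy hxy])
  refine ⟨?_, hf.continuousOn.comp hcont hmaps, hanti, fun x hx => ?_,
    fun x hx => hf.nonneg _ (hmaps hx)⟩
  · have hconc : ConcaveOn ℝ (Icc 0 1) (fun x => 1 - g x) :=
      (concaveOn_const 1 (convex_Icc 0 1)).sub hg.convexOn
    have himg := hmaps.image_subset
    have himg_convex : Convex ℝ ((fun x => 1 - g x) '' Icc 0 1) :=
      (isPreconnected_Icc.image _ hcont).convex
    exact (hf.convexOn.subset himg himg_convex).comp_concaveOn hconc (hf.antitoneOn.mono himg)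
  · have hx_le : x ≤ 1 - g x := by linarith [hg.le_one_sub x hx]
    exact (hf.antitoneOn hx (hmaps hx) hx_le).trans (hf.le_one_sub x hx)

lemma tfInv_comp_one_sub (hf : IsTradeOff f) (hg : IsTradeOff g) (hα : 0 ≤ α) :
    tfInv (fun x => f (1 - g x)) α = tfInv g (1 - tfInv f α) := by
  have hF := hf.tfInv_mem_Icc hα
  have hβ : 0 ≤ 1 - tfInv f α := by linarith [hF.2]
  have key : ∀ t ∈ Icc (0:ℝ) 1,
      tfInv (fun x => f (1 - g x)) α ≤ t ↔ tfInv g (1 - tfInv f α) ≤ t := fun t ht => by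
    rw [(hf.comp_one_sub hg).tfInv_le_iff hα ht, ← hf.tfInv_le_iff hα (hg.mapsTo_one_sub ht),
      hg.tfInv_le_iff hβ ht, le_sub_comm]
  exact le_antisymm ((key _ (hg.tfInv_mem_Icc hβ)).2 le_rfl)
    ((key _ ((hf.comp_one_sub hg).tfInv_mem_Icc hα)).1 le_rfl)

end IsTradeOff

/-- For trade-off functions `f, g`, the function `f ⊗̂ g (x) = f(1 - g(x))` is again a
trade-off function, and `(f ⊗̂ g)⁻¹ = (g⁻¹) ⊗̂ (f⁻¹)`. -/
theorem statement12 (f g : ℝ → ℝ)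
    (hfconv : ConvexOn ℝ (Icc (0:ℝ) 1) f) (hfcont : ContinuousOn f (Icc (0:ℝ) 1))
    (hfanti : AntitoneOn f (Icc (0:ℝ) 1)) (hfle : ∀ x ∈ Icc (0:ℝ) 1, f x ≤ 1 - x)
    (hfnn : ∀ x ∈ Icc (0:ℝ) 1, 0 ≤ f x)
    (hgconv : ConvexOn ℝ (Icc (0:ℝ) 1) g) (hgcont : ContinuousOn g (Icc (0:ℝ) 1))
    (hganti : AntitoneOn g (Icc (0:ℝ) 1)) (hgle : ∀ x ∈ Icc (0:ℝ) 1, g x ≤ 1 - x)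
    (hgnn : ∀ x ∈ Icc (0:ℝ) 1, 0 ≤ g x) :
    (ConvexOn ℝ (Icc (0:ℝ) 1) (fun x => f (1 - g x)) ∧
      ContinuousOn (fun x => f (1 - g x)) (Icc (0:ℝ) 1) ∧
      AntitoneOn (fun x => f (1 - g x)) (Icc (0:ℝ) 1) ∧
      (∀ x ∈ Icc (0:ℝ) 1, f (1 - g x) ≤ 1 - x) ∧
      (∀ x ∈ Icc (0:ℝ) 1, 0 ≤ f (1 - g x))) ∧
    (∀ α ∈ Icc (0:ℝ) 1,
      tfInv (fun x => f (1 - g x)) α = tfInv g (1 - tfInv f α)) := by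
  have hf : IsTradeOff f := ⟨hfconv, hfcont, hfanti, hfle, hfnn⟩
  have hg : IsTradeOff g := ⟨hgconv, hgcont, hganti, hgle, hgnn⟩
  obtain ⟨hconv, hcont, hanti, hle, hnn⟩ := hf.comp_one_sub hg
  exact ⟨⟨hconv, hcont, hanti, hle, hnn⟩, fun α hα => hf.tfInv_comp_one_sub hg hα.1⟩
end

section
/- If T(P,Q) ≥ f and T(Q,R) ≥ g pointwise, then T(P,R)(α) ≥ g(1 − f(α)) for all α ∈ [0,1]. -/
open MeasureTheory ProbabilityTheory Set

lemma aux_int {Ω : Type*} [MeasurableSpace Ω] (Q : Measure Ω) [IsProbabilityMeasure Q]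
    {φ : Ω → ℝ} (hm : Measurable φ) (hb : ∀ ω, φ ω ∈ Icc (0:ℝ) 1) :
    Integrable φ Q ∧ 0 ≤ (∫ ω, φ ω ∂Q) ∧ (∫ ω, φ ω ∂Q) ≤ 1 := by
  have hint : Integrable φ Q := by
    refine (integrable_const (1:ℝ)).mono' hm.aestronglyMeasurable ?_
    filter_upwards with ω
    rw [Real.norm_eq_abs, abs_of_nonneg (hb ω).1]
    exact (hb ω).2
  refine ⟨hint, integral_nonneg fun ω => (hb ω).1, ?_⟩
  calc (∫ ω, φ ω ∂Q) ≤ ∫ _, (1:ℝ) ∂Q := integral_mono hint (integrable_const 1) fun ω => (hb ω).2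
    _ = 1 := by simp

lemma aux_bdd {Ω : Type*} [MeasurableSpace Ω] (P Q : Measure Ω) [IsProbabilityMeasure Q]
    (α : ℝ) :
    BddBelow { β : ℝ | ∃ φ : Ω → ℝ, Measurable φ ∧ (∀ ω, φ ω ∈ Icc (0:ℝ) 1) ∧
      (∫ ω, φ ω ∂P) ≤ α ∧ β = 1 - ∫ ω, φ ω ∂Q } := by
  refine ⟨0, fun β hβ => ?_⟩
  obtain ⟨φ, hm, hb, _, hβ⟩ := hβ
  have := (aux_int Q hm hb).2.2
  subst hβ; linarith

/-- If `T(P,Q) ≥ f` and `T(Q,R) ≥ g` pointwise on `[0,1]` for trade-off functions `f, g`,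
then `T(P,R)(α) ≥ g(1 - f(α))` for all `α ∈ [0,1]`. -/
theorem statement13 {Ω : Type*} [MeasurableSpace Ω] (P Q R : Measure Ω)
    [IsProbabilityMeasure P] [IsProbabilityMeasure Q] [IsProbabilityMeasure R]
    (f g : ℝ → ℝ)
    (hfconv : ConvexOn ℝ (Icc (0:ℝ) 1) f) (hfcont : ContinuousOn f (Icc (0:ℝ) 1))
    (hfanti : AntitoneOn f (Icc (0:ℝ) 1)) (hfle : ∀ x ∈ Icc (0:ℝ) 1, f x ≤ 1 - x)
    (hfnn : ∀ x ∈ Icc (0:ℝ) 1, 0 ≤ f x)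
    (hgconv : ConvexOn ℝ (Icc (0:ℝ) 1) g) (hgcont : ContinuousOn g (Icc (0:ℝ) 1))
    (hganti : AntitoneOn g (Icc (0:ℝ) 1)) (hgle : ∀ x ∈ Icc (0:ℝ) 1, g x ≤ 1 - x)
    (hgnn : ∀ x ∈ Icc (0:ℝ) 1, 0 ≤ g x)
    (hPQ : ∀ α ∈ Icc (0:ℝ) 1, f α ≤ tradeoff P Q α)
    (hQR : ∀ α ∈ Icc (0:ℝ) 1, g α ≤ tradeoff Q R α) :
    ∀ α ∈ Icc (0:ℝ) 1, g (1 - f α) ≤ tradeoff P R α := by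
  intro α hα
  have hfα : 0 ≤ f α := hfnn α hα
  have hfα1 : f α ≤ 1 - α := hfle α hα
  have h1fα : (1 - f α) ∈ Icc (0:ℝ) 1 := ⟨by linarith [hα.1], by linarith⟩
  -- show g (1 - f α) is a lower bound of the PR set
  refine le_csInf ⟨1, 0, measurable_const, fun ω => ⟨le_refl 0, zero_le_one⟩, by
      simpa using hα.1, by simp⟩ ?_
  rintro β ⟨φ, hm, hb, hP, rfl⟩
  obtain ⟨hintP, hP0, hP1⟩ := aux_int P hm hb
  obtain ⟨hintQ, hQ0, hQ1⟩ := aux_int Q hm hb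
  set x := ∫ ω, φ ω ∂P with hx
  set y := ∫ ω, φ ω ∂Q with hy
  have hxmem : x ∈ Icc (0:ℝ) 1 := ⟨hP0, hP1⟩
  have hymem : y ∈ Icc (0:ℝ) 1 := ⟨hQ0, hQ1⟩
  -- tradeoff P Q x ≤ 1 - y
  have h1 : tradeoff P Q x ≤ 1 - y :=
    csInf_le (aux_bdd P Q x) ⟨φ, hm, hb, le_refl x, rfl⟩
  have h2 : f α ≤ f x := hfanti hxmem ⟨hxmem.1.trans hP, hα.2⟩ hP
  have h3 : f x ≤ tradeoff P Q x := hPQ x hxmem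
  have hy' : y ≤ 1 - f α := by linarith
  -- tradeoff Q R y ≤ 1 - ∫ φ dR
  have h4 : tradeoff Q R y ≤ 1 - integral R (fun ω => φ ω) :=
    csInf_le (aux_bdd Q R y) ⟨φ, hm, hb, le_refl y, rfl⟩
  have h5 : g y ≤ tradeoff Q R y := hQR y hymem
  have h6 : g (1 - f α) ≤ g y := hganti hymem h1fα hy'
  linarith
end
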